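/- arXiv:1703.00139 — 12 statements merged into one kernel-verified Lean document; each statement's English description precedes it below -/
import Mathlib

section
/- Let G be a digraph on {1,…,n} and P_π̃ the weighted poset induced by G, with associated map φ_π̃ : 𝔽₂ⁿ → 𝔽₂^m. Then for every x ∈ 𝔽₂ⁿ, w_G(x) = w_{P_π̃}(x^{φ_π̃}). Equivalently, ⟨x⟩_G equals the union of the equivalence classes belonging to ⟨x^{φ_π̃}⟩_{P_π̃}. -/
open Classical

noncomputable def wtP {α : Type*} [Fintype α] (le : α → α → Prop) (π : α → ℕ)
    (x : α → ZMod 2) : ℕ :=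
  ∑ j ∈ Finset.univ.filter (fun j => ∃ i, x i ≠ 0 ∧ le j i), π j

noncomputable def wtG {V : Type*} [Fintype V] (E : V → V → Prop) (x : V → ZMod 2) : ℕ :=
  (Finset.univ.filter (fun v => ∃ u, x u ≠ 0 ∧ Relation.ReflTransGen E u v)).card

def sim {V : Type*} (E : V → V → Prop) (u v : V) : Prop :=
  u = v ∨ (Relation.TransGen E u v ∧ Relation.TransGen E v u)

theorem sim_equivalence {V : Type*} (E : V → V → Prop) : Equivalence (sim E) := by
  constructor
  · intro x; exact Or.inl rfl
  · intro x y h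
    rcases h with h | ⟨a, b⟩
    · exact Or.inl h.symm
    · exact Or.inr ⟨b, a⟩
  · intro x y z h1 h2
    rcases h1 with h1 | ⟨a, b⟩
    · subst h1; exact h2
    · rcases h2 with h2 | ⟨c, d⟩
      · subst h2; exact Or.inr ⟨a, b⟩
      · exact Or.inr ⟨a.trans c, d.trans b⟩

def simSetoid {V : Type*} (E : V → V → Prop) : Setoid V :=
  ⟨sim E, sim_equivalence E⟩

noncomputable instance {V : Type*} [Fintype V] (E : V → V → Prop) :
    Fintype (Quotient (simSetoid E)) :=
  Fintype.ofFinite _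

def clsLe {V : Type*} (E : V → V → Prop) (c d : Quotient (simSetoid E)) : Prop :=
  c = d ∨ ∃ u v, Quotient.mk (simSetoid E) u = c ∧ Quotient.mk (simSetoid E) v = d ∧
    Relation.TransGen E v u

noncomputable def clsWt {V : Type*} [Fintype V] (E : V → V → Prop)
    (c : Quotient (simSetoid E)) : ℕ :=
  (Finset.univ.filter (fun v => Quotient.mk (simSetoid E) v = c)).card

noncomputable def phiTilde {V : Type*} (E : V → V → Prop) (x : V → ZMod 2) :
    Quotient (simSetoid E) → ZMod 2 :=
  fun c => if ∀ v, Quotient.mk (simSetoid E) v = c → x v = 0 then 0 else 1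

/-! Two vertices lie in a common class exactly when each reaches the other, so the class order
`clsLe` is reachability read on representatives. Hence `v ∈ ⟨x⟩_G` iff the class of `v` lies
below a class meeting the support of `x`, i.e. iff it lies in `⟨x^φ⟩_P`; summing the class
sizes over `⟨x^φ⟩_P` counts `⟨x⟩_G` fiber by fiber. -/

namespace DigraphPoset

variable {V : Type*} {E : V → V → Prop}

theorem reflTransGen_of_mk_eq {u v : V}
    (h : Quotient.mk (simSetoid E) u = Quotient.mk (simSetoid E) v) :
    Relation.ReflTransGen E u v := by
  rcases Quotient.exact h with rfl | ⟨huv, -⟩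
  · exact .refl
  · exact huv.to_reflTransGen

theorem clsLe_mk_iff {u v : V} :
    clsLe E (Quotient.mk (simSetoid E) v) (Quotient.mk (simSetoid E) u) ↔
      Relation.ReflTransGen E u v := by
  constructor
  · rintro (h | ⟨a, b, ha, hb, hba⟩)
    · exact reflTransGen_of_mk_eq h.symm
    · exact (reflTransGen_of_mk_eq hb.symm).trans
        (hba.to_reflTransGen.trans (reflTransGen_of_mk_eq ha))
  · intro h
    rcases Relation.reflTransGen_iff_eq_or_transGen.1 h with rfl | h
    · exact .inl rfl
    · exact .inr ⟨v, u, rfl, rfl, h⟩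

theorem phiTilde_ne_zero_iff (x : V → ZMod 2) (d : Quotient (simSetoid E)) :
    phiTilde E x d ≠ 0 ↔ ∃ u, Quotient.mk (simSetoid E) u = d ∧ x u ≠ 0 := by
  by_cases h : ∀ v, Quotient.mk (simSetoid E) v = d → x v = 0 <;> simp_all [phiTilde]

theorem exists_reach_iff_exists_clsLe (x : V → ZMod 2) (v : V) :
    (∃ u, x u ≠ 0 ∧ Relation.ReflTransGen E u v) ↔
      ∃ d, phiTilde E x d ≠ 0 ∧ clsLe E (Quotient.mk (simSetoid E) v) d := by
  simp only [phiTilde_ne_zero_iff]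
  constructor
  · rintro ⟨u, hu, huv⟩
    exact ⟨_, ⟨u, rfl, hu⟩, clsLe_mk_iff.2 huv⟩
  · rintro ⟨-, ⟨u, rfl, hu⟩, hle⟩
    exact ⟨u, hu, clsLe_mk_iff.1 hle⟩

theorem wtG_eq_wtP [Fintype V] (x : V → ZMod 2) :
    wtG E x = wtP (clsLe E) (clsWt E) (phiTilde E x) := by
  unfold wtG wtP clsWt
  rw [Finset.card_eq_sum_card_fiberwise (f := Quotient.mk (simSetoid E))
    (t := Finset.univ.filter fun d => ∃ i, phiTilde E x i ≠ 0 ∧ clsLe E d i) fun v hv => by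
      simpa [exists_reach_iff_exists_clsLe] using hv]
  refine Finset.sum_congr rfl fun j hj => ?_
  rw [Finset.filter_filter]
  refine congrArg Finset.card (Finset.filter_congr ?_)
  rintro v -
  simp only [and_iff_right_iff_imp]
  rintro rfl
  simpa [exists_reach_iff_exists_clsLe] using hj

end DigraphPoset

open DigraphPoset in
theorem stmt_2_general {n : ℕ} (E : Fin n → Fin n → Prop)
    (x : Fin n → ZMod 2) :
    wtG E x = wtP (clsLe E) (clsWt E) (phiTilde E x) ∧
    (∀ v : Fin n,
      (∃ u, x u ≠ 0 ∧ Relation.ReflTransGen E u v) ↔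
      (∃ d, phiTilde E x d ≠ 0 ∧ clsLe E (Quotient.mk (simSetoid E) v) d)) :=
  ⟨wtG_eq_wtP x, exists_reach_iff_exists_clsLe x⟩

theorem stmt_2 {n : ℕ} (E : Fin n → Fin n → Prop) (hirrefl : ∀ v, ¬ E v v)
    (x : Fin n → ZMod 2) :
    wtG E x = wtP (clsLe E) (clsWt E) (phiTilde E x) ∧
    (∀ v : Fin n,
      (∃ u, x u ≠ 0 ∧ Relation.ReflTransGen E u v) ↔
      (∃ d, phiTilde E x d ≠ 0 ∧ clsLe E (Quotient.mk (simSetoid E) v) d)) :=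
  stmt_2_general E x
end

section
/- Let G be a digraph on {1,…,n} and P_π̃ the weighted poset induced by G, with associated map φ_π̃ : 𝔽₂ⁿ → 𝔽₂^m. Then for all x, y ∈ 𝔽₂ⁿ, w_{P_π̃}(x^{φ_π̃} + y^{φ_π̃}) ≤ w_{P_π̃}((x+y)^{φ_π̃}). -/
open Classical

theorem stmt_3 {n : ℕ} (E : Fin n → Fin n → Prop) (hirrefl : ∀ v, ¬ E v v)
    (x y : Fin n → ZMod 2) :
    wtP (clsLe E) (clsWt E) (phiTilde E x + phiTilde E y) ≤
      wtP (clsLe E) (clsWt E) (phiTilde E (x + y)) := by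
  apply Finset.sum_le_sum_of_subset
  intro j hj
  simp only [Finset.mem_filter, Finset.mem_univ, true_and] at hj ⊢
  obtain ⟨i, hi, hle⟩ := hj
  refine ⟨i, ?_, hle⟩
  intro hzero
  apply hi
  simp only [Pi.add_apply, phiTilde] at hzero ⊢
  by_cases hA : ∀ v, Quotient.mk (simSetoid E) v = i → x v = 0 <;>
    by_cases hB : ∀ v, Quotient.mk (simSetoid E) v = i → y v = 0
  · rw [if_pos hA, if_pos hB, add_zero]
  · exfalso
    push_neg at hB
    obtain ⟨v, hv, hyv⟩ := hB
    rw [if_neg] at hzero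
    · exact one_ne_zero hzero
    · push_neg
      refine ⟨v, hv, ?_⟩
      simpa [Pi.add_apply, hA v hv] using hyv
  · exfalso
    push_neg at hA
    obtain ⟨v, hv, hxv⟩ := hA
    rw [if_neg] at hzero
    · exact one_ne_zero hzero
    · push_neg
      refine ⟨v, hv, ?_⟩
      simpa [Pi.add_apply, hB v hv] using hxv
  · simp only [if_neg hA, if_neg hB]
    decide
end

section
/- Let G be a digraph on {1,…,n}, P_π̃ the weighted poset induced by G on m elements, and φ_π̃ : 𝔽₂ⁿ → 𝔽₂^m the associated map. If C ⊆ 𝔽₂ⁿ is an r-covering G-code, then its image C^{φ_π̃} = {x^{φ_π̃} : x ∈ C} ⊆ 𝔽₂^m is an r-covering P_π̃-code. -/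
open Classical

noncomputable def dP {α : Type*} [Fintype α] (le : α → α → Prop) (π : α → ℕ)
    (x y : α → ZMod 2) : ℕ :=
  wtP le π (x - y)

noncomputable def dG {V : Type*} [Fintype V] (E : V → V → Prop) (x y : V → ZMod 2) : ℕ :=
  wtG E (x - y)

def IsCovering {β : Type*} (d : β → β → ℕ) (C : Set β) (r : ℕ) : Prop :=
  ∀ x, ∃ c ∈ C, d c x ≤ r

/-!
Lifting a word `y` on the classes to `x v := y [v]` gives `φ(x) = y`, so it suffices that `φ`
does not increase distances: every class `ī` counted in `d_P(φ a, φ b)` lies below a class on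
which `a` and `b` differ, so each vertex of `ī` is reachable from a vertex where `a` and `b`
differ, and the `|ī|` vertices of `ī` are all counted in `d_G(a, b)`.
-/

open Finset

namespace DigraphCode

variable {V : Type*} (E : V → V → Prop)

theorem reflTransGen_of_sim {u v : V} (h : sim E u v) : Relation.ReflTransGen E u v := by
  rcases h with rfl | ⟨huv, -⟩
  · exact .refl
  · exact huv.to_reflTransGen

theorem reflTransGen_of_clsLe {u v : V} (h : clsLe E (Quotient.mk _ v) (Quotient.mk _ u)) :
    Relation.ReflTransGen E u v := by
  rcases h with h | ⟨v', u', hv', hu', hpath⟩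
  · exact reflTransGen_of_sim E (Quotient.exact h.symm)
  · have hu : Relation.ReflTransGen E u u' := reflTransGen_of_sim E (Quotient.exact hu'.symm)
    have hv : Relation.ReflTransGen E v' v := reflTransGen_of_sim E (Quotient.exact hv')
    exact (hu.trans hpath.to_reflTransGen).trans hv

theorem exists_ne_of_phiTilde_ne {a b : V → ZMod 2} {c : Quotient (simSetoid E)}
    (h : phiTilde E a c ≠ phiTilde E b c) : ∃ u, Quotient.mk _ u = c ∧ a u ≠ b u := by
  unfold phiTilde at h
  by_contra! hab
  have hsame : ∀ v, Quotient.mk _ v = c → (a v = 0 ↔ b v = 0) := fun v hv => by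
    rw [hab v hv]
  rw [if_congr (forall_congr' fun v => imp_congr_right fun hv => hsame v hv) rfl rfl] at h
  exact h rfl

theorem phiTilde_comp_mk (y : Quotient (simSetoid E) → ZMod 2) :
    phiTilde E (fun v => y (Quotient.mk _ v)) = y := by
  funext c
  induction c using Quotient.inductionOn with
  | h v =>
    unfold phiTilde
    split_ifs with h
    · exact (h v rfl).symm
    · push Not at h
      obtain ⟨w, hw, hyw⟩ := h
      rw [hw] at hyw
      exact (Fin.eq_one_of_ne_zero _ hyw).symm

variable [Fintype V]

theorem sum_clsWt_eq_card (S : Finset (Quotient (simSetoid E))) :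
    ∑ c ∈ S, clsWt E c = #{v | Quotient.mk _ v ∈ S} := by
  rw [card_eq_sum_card_fiberwise (s := {v | Quotient.mk _ v ∈ S}) (t := S)
    fun v hv => (mem_filter.mp hv).2]
  refine sum_congr rfl fun c hc => congrArg card ?_
  ext v
  simp only [mem_filter, mem_univ, true_and]
  exact ⟨fun hv => ⟨hv ▸ hc, hv⟩, And.right⟩

theorem dP_phiTilde_le_dG (a b : V → ZMod 2) :
    dP (clsLe E) (clsWt E) (phiTilde E a) (phiTilde E b) ≤ dG E a b := by
  unfold dP wtP dG wtG
  rw [sum_clsWt_eq_card]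
  refine card_le_card fun v hv => ?_
  simp only [mem_filter, mem_univ, true_and, Pi.sub_apply, sub_ne_zero] at hv ⊢
  obtain ⟨c, hc, hle⟩ := hv
  obtain ⟨u, rfl, hu⟩ := exists_ne_of_phiTilde_ne E hc
  exact ⟨u, hu, reflTransGen_of_clsLe E hle⟩

end DigraphCode

open DigraphCode in
theorem stmt_6_general {n : ℕ} (E : Fin n → Fin n → Prop)
    (C : Set (Fin n → ZMod 2)) (r : ℕ)
    (hC : IsCovering (dG E) C r) :
    IsCovering (dP (clsLe E) (clsWt E)) (phiTilde E '' C) r := by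
  intro y
  obtain ⟨c, hcC, hc⟩ := hC fun v => y (Quotient.mk (simSetoid E) v)
  refine ⟨phiTilde E c, Set.mem_image_of_mem _ hcC, ?_⟩
  calc dP (clsLe E) (clsWt E) (phiTilde E c) y
      = dP (clsLe E) (clsWt E) (phiTilde E c)
          (phiTilde E fun v => y (Quotient.mk (simSetoid E) v)) := by rw [phiTilde_comp_mk]
    _ ≤ _ := dP_phiTilde_le_dG E _ _
    _ ≤ r := hc

theorem stmt_6 {n : ℕ} (E : Fin n → Fin n → Prop) (hirrefl : ∀ v, ¬ E v v)
    (C : Set (Fin n → ZMod 2)) (r : ℕ)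
    (hC : IsCovering (dG E) C r) :
    IsCovering (dP (clsLe E) (clsWt E)) (phiTilde E '' C) r :=
  stmt_6_general E C r hC
end

section
/- Let P_π be a weighted poset on m elements of total weight n, G_π the induced digraph on n vertices, and φ_π : 𝔽₂^m → 𝔽₂ⁿ the associated map. If C ⊆ 𝔽₂^m is an r-packing P_π-code, then its image C^{φ_π} = {u^{φ_π} : u ∈ C} ⊆ 𝔽₂ⁿ is an r-packing G_π-code. -/
open Classical

def IsPacking {β : Type*} (d : β → β → ℕ) (C : Set β) (r : ℕ) : Prop :=
  ∀ c₁ ∈ C, ∀ c₂ ∈ C, c₁ ≠ c₂ → ∀ x, ¬(d c₁ x ≤ r ∧ d c₂ x ≤ r)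

def Gpi {m : ℕ} (le : Fin m → Fin m → Prop) (π : Fin m → ℕ) :
    (Σ a : Fin m, Fin (π a)) → (Σ a : Fin m, Fin (π a)) → Prop :=
  fun u v =>
    (u.2.val = 0 ∧ v.2.val = 0 ∧ u.1 ≠ v.1 ∧ le v.1 u.1) ∨
    (u.1 = v.1 ∧ u.2.val ≠ v.2.val ∧ (u.2.val + 1) % π u.1 = v.2.val)

def phiPi {m : ℕ} (π : Fin m → ℕ) (u : Fin m → ZMod 2) :
    (Σ a : Fin m, Fin (π a)) → ZMod 2 :=
  fun v => if v.2.val = 0 then u v.1 else 0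

/- Let ψ x ∈ 𝔽₂^m read a word x ∈ 𝔽₂ⁿ off the bottom vertices a₀. Then d_P(c, ψ x) ≤ d_G(φ_π c, x):
if a lies in the support of c - ψ x, then a₀ lies in the support of φ_π c - x, and for every b ⪯ a
the whole block b̂ is reachable from a₀ (one poset edge to b₀, then around the cycle of b̂).
So a word x in the G-spheres around φ_π c₁ and φ_π c₂ would put ψ x in the P-spheres around
c₁ and c₂. -/

theorem IsPacking.image_of_dist_le {β γ : Type*} {d : β → β → ℕ} {d' : γ → γ → ℕ}
    {C : Set β} {r : ℕ} (hC : IsPacking d C r) (f : β → γ) (g : γ → β)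
    (hle : ∀ c x, d c (g x) ≤ d' (f c) x) :
    IsPacking d' (f '' C) r := by
  rintro _ ⟨c₁, hc₁, rfl⟩ _ ⟨c₂, hc₂, rfl⟩ hne x ⟨h₁, h₂⟩
  exact hC c₁ hc₁ c₂ hc₂ (by rintro rfl; exact hne rfl) (g x)
    ⟨(hle c₁ x).trans h₁, (hle c₂ x).trans h₂⟩

section Gpi

variable {m : ℕ} {le : Fin m → Fin m → Prop} {π : Fin m → ℕ}

theorem Gpi_reflTransGen_bottom_of_le {i j : Fin m} (hi : 0 < π i) (hj : 0 < π j)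
    (hle : le j i) : Relation.ReflTransGen (Gpi le π) ⟨i, ⟨0, hi⟩⟩ ⟨j, ⟨0, hj⟩⟩ := by
  by_cases hij : i = j
  · subst hij
    exact .refl
  · exact .single (Or.inl ⟨rfl, rfl, hij, hle⟩)

theorem Gpi_reflTransGen_bottom_cycle (j : Fin m) (t : ℕ) (ht : t < π j) :
    Relation.ReflTransGen (Gpi le π) ⟨j, ⟨0, by omega⟩⟩ ⟨j, ⟨t, ht⟩⟩ := by
  induction t with
  | zero => exact .refl
  | succ t ih =>
    exact (ih (by omega)).tail (Or.inr ⟨rfl, by simp, Nat.mod_eq_of_lt ht⟩)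

theorem Gpi_reflTransGen_of_le (hπ : ∀ a, 0 < π a) {i j : Fin m} (hle : le j i)
    (t : Fin (π j)) : Relation.ReflTransGen (Gpi le π) ⟨i, ⟨0, hπ i⟩⟩ ⟨j, t⟩ :=
  (Gpi_reflTransGen_bottom_of_le (hπ i) (hπ j) hle).trans
    (Gpi_reflTransGen_bottom_cycle j t.val t.isLt)

theorem wtP_le_wtG_of_eq_bottom (hπ : ∀ a, 0 < π a) (u : Fin m → ZMod 2)
    (y : (Σ a : Fin m, Fin (π a)) → ZMod 2) (hy : ∀ a, y ⟨a, ⟨0, hπ a⟩⟩ = u a) :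
    wtP le π u ≤ wtG (Gpi le π) y := by
  set S := Finset.univ.filter (fun j => ∃ i, u i ≠ 0 ∧ le j i)
  have hblocks : S.sigma (fun j => (Finset.univ : Finset (Fin (π j)))) ⊆
      Finset.univ.filter (fun v => ∃ w, y w ≠ 0 ∧ Relation.ReflTransGen (Gpi le π) w v) := by
    rintro ⟨j, t⟩ hv
    obtain ⟨i, hi, hle⟩ := (Finset.mem_filter.mp (Finset.mem_sigma.mp hv).1).2
    exact Finset.mem_filter.mpr
      ⟨Finset.mem_univ _, _, (hy i).symm ▸ hi, Gpi_reflTransGen_of_le hπ hle t⟩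
  calc wtP le π u = (S.sigma fun j => (Finset.univ : Finset (Fin (π j)))).card := by
        simp [wtP, S, Finset.card_sigma]
    _ ≤ wtG (Gpi le π) y := Finset.card_le_card hblocks

def restrictBottom (hπ : ∀ a, 0 < π a) (x : (Σ a : Fin m, Fin (π a)) → ZMod 2) :
    Fin m → ZMod 2 :=
  fun a => x ⟨a, ⟨0, hπ a⟩⟩

theorem dP_restrictBottom_le_dG_phiPi (hπ : ∀ a, 0 < π a) (c : Fin m → ZMod 2)
    (x : (Σ a : Fin m, Fin (π a)) → ZMod 2) :
    dP le π c (restrictBottom hπ x) ≤ dG (Gpi le π) (phiPi π c) x :=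
  wtP_le_wtG_of_eq_bottom hπ _ _ fun a => by simp [phiPi, restrictBottom]

end Gpi

theorem stmt_7_general {m : ℕ} (le : Fin m → Fin m → Prop)
    (π : Fin m → ℕ) (hπ : ∀ a, 0 < π a)
    (C : Set (Fin m → ZMod 2)) (r : ℕ)
    (hC : IsPacking (dP le π) C r) :
    IsPacking (dG (Gpi le π)) (phiPi π '' C) r :=
  hC.image_of_dist_le (phiPi π) (restrictBottom hπ) (dP_restrictBottom_le_dG_phiPi hπ)

theorem stmt_7 {m : ℕ} (le : Fin m → Fin m → Prop)
    (hrefl : ∀ a, le a a)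
    (hantisymm : ∀ a b, le a b → le b a → a = b)
    (htrans : ∀ a b c, le a b → le b c → le a c)
    (π : Fin m → ℕ) (hπ : ∀ a, 0 < π a)
    (C : Set (Fin m → ZMod 2)) (r : ℕ)
    (hC : IsPacking (dP le π) C r) :
    IsPacking (dG (Gpi le π)) (phiPi π '' C) r :=
  stmt_7_general le π hπ C r hC
end

section
/- Let P_π be a weighted poset on {1,…,n} and let C ⊆ 𝔽₂ⁿ be a binary linear code of dimension k. Then C is an r-perfect P_π-code if and only if both of the following hold: (i) |S_{P_π}(0;r)| = 2^{n−k}; and (ii) for every nonzero codeword c ∈ C and every way of writing the support of c as a disjoint union of two subsets, with x and y the vectors supported on the two parts (so x + y = c), either w_{P_π}(x) ≥ r+1 or w_{P_π}(y) ≥ r+1. -/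
open Classical

lemma neg_self_vec {n : ℕ} (v : Fin n → ZMod 2) : -v = v := by
  funext i
  show -(v i) = v i
  generalize v i = a
  revert a; decide

lemma wtP_mono {n : ℕ} (le : Fin n → Fin n → Prop) (π : Fin n → ℕ)
    {x y : Fin n → ZMod 2} (h : ∀ i, x i ≠ 0 → y i ≠ 0) :
    wtP le π x ≤ wtP le π y := by
  apply Finset.sum_le_sum_of_subset
  intro j hj
  simp only [Finset.mem_filter, Finset.mem_univ, true_and] at hj ⊢
  obtain ⟨i, hi, hle⟩ := hj
  exact ⟨i, h i hi, hle⟩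

lemma dP_zero {n : ℕ} (le : Fin n → Fin n → Prop) (π : Fin n → ℕ)
    (x : Fin n → ZMod 2) : dP le π 0 x = wtP le π x := by
  unfold dP
  rw [zero_sub, neg_self_vec]

lemma dP_shift {n : ℕ} (le : Fin n → Fin n → Prop) (π : Fin n → ℕ)
    (c x : Fin n → ZMod 2) : dP le π c x = dP le π 0 (x - c) := by
  unfold dP
  rw [zero_sub, neg_sub]

lemma sphere_card {n r : ℕ} (le : Fin n → Fin n → Prop) (π : Fin n → ℕ)
    (c : Fin n → ZMod 2) :
    (Finset.univ.filter (fun y : Fin n → ZMod 2 => dP le π c y ≤ r)).card =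
      (Finset.univ.filter (fun y : Fin n → ZMod 2 => dP le π 0 y ≤ r)).card := by
  apply Finset.card_bij' (fun y _ => y - c) (fun z _ => z + c)
  · intro y hy
    simp only [Finset.mem_filter, Finset.mem_univ, true_and] at hy ⊢
    rwa [← dP_shift]
  · intro z hz
    simp only [Finset.mem_filter, Finset.mem_univ, true_and] at hz ⊢
    rwa [dP_shift, add_sub_cancel_right]
  · intro y _; abel
  · intro z _; abel

theorem stmt_8 {n k r : ℕ} (le : Fin n → Fin n → Prop)
    (hrefl : ∀ i, le i i)
    (hantisymm : ∀ i j, le i j → le j i → i = j)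
    (htrans : ∀ i j l, le i j → le j l → le i l)
    (π : Fin n → ℕ) (hπ : ∀ i, 0 < π i)
    (C : Submodule (ZMod 2) (Fin n → ZMod 2))
    (hk : Module.finrank (ZMod 2) C = k) :
    (IsCovering (dP le π) (C : Set (Fin n → ZMod 2)) r ∧
        IsPacking (dP le π) (C : Set (Fin n → ZMod 2)) r) ↔
      ((Finset.univ.filter (fun y : Fin n → ZMod 2 => dP le π 0 y ≤ r)).card = 2 ^ (n - k) ∧
        ∀ c ∈ C, c ≠ 0 → ∀ x y : Fin n → ZMod 2,
          (∀ i, x i = 0 ∨ y i = 0) → x + y = c →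
          r + 1 ≤ wtP le π x ∨ r + 1 ≤ wtP le π y) := by
  -- basic cardinality facts
  have hkn : k ≤ n := by
    rw [← hk]
    have := Submodule.finrank_le C
    rwa [Module.finrank_fin_fun (ZMod 2)] at this
  have hcardC : Fintype.card C = 2 ^ k := by
    rw [Module.card_eq_pow_finrank (K := ZMod 2) (V := C), ZMod.card, hk]
  set CF : Finset (Fin n → ZMod 2) := Finset.univ.filter (fun x => x ∈ C) with hCF
  have hCFcard : CF.card = 2 ^ k := by
    rw [hCF, ← hcardC]
    exact (Fintype.card_subtype _).symm
  have hspace : (Finset.univ : Finset (Fin n → ZMod 2)).card = 2 ^ n := by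
    simp [ZMod.card]
  set S : (Fin n → ZMod 2) → Finset (Fin n → ZMod 2) :=
    fun c => Finset.univ.filter (fun y => dP le π c y ≤ r) with hS
  -- the key packing argument
  have packing_of_min :
      (∀ c ∈ C, c ≠ 0 → ∀ x y : Fin n → ZMod 2,
          (∀ i, x i = 0 ∨ y i = 0) → x + y = c →
          r + 1 ≤ wtP le π x ∨ r + 1 ≤ wtP le π y) →
      IsPacking (dP le π) (C : Set (Fin n → ZMod 2)) r := by
    intro hmin c₁ hc₁ c₂ hc₂ hne x ⟨h1, h2⟩
    set a := c₁ - x with ha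
    set b := c₂ - x with hb
    have hc : c₁ - c₂ = a - b := by rw [ha, hb]; abel
    have hmem : c₁ - c₂ ∈ C := C.sub_mem hc₁ hc₂
    have hne0 : c₁ - c₂ ≠ 0 := sub_ne_zero.mpr hne
    set x' : Fin n → ZMod 2 := fun i => if a i ≠ 0 then (c₁ - c₂) i else 0 with hx'
    set y' : Fin n → ZMod 2 := fun i => if a i ≠ 0 then 0 else (c₁ - c₂) i with hy'
    have hdisj : ∀ i, x' i = 0 ∨ y' i = 0 := by
      intro i
      by_cases h : a i ≠ 0
      · right; simp [hy', h]
      · left; simp [hx', h]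
    have hsum : x' + y' = c₁ - c₂ := by
      funext i
      by_cases h : a i = 0 <;> simp [hx', hy', h]
    have hwx : wtP le π x' ≤ wtP le π a := by
      apply wtP_mono
      intro i hi
      by_contra h
      simp only [hx'] at hi
      rw [if_neg (by simpa using h)] at hi
      exact hi rfl
    have hwy : wtP le π y' ≤ wtP le π b := by
      apply wtP_mono
      intro i hi
      simp only [hy'] at hi
      by_cases h : a i ≠ 0
      · rw [if_pos h] at hi; exact absurd rfl hi
      · rw [if_neg h] at hi
        push_neg at h
        intro hb0
        apply hi
        have : (c₁ - c₂) i = a i - b i := by rw [hc]; rfl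
        rw [this, h, hb0, sub_zero]
    have := hmin _ hmem hne0 x' y' hdisj hsum
    have hwa : wtP le π a ≤ r := h1
    have hwb : wtP le π b ≤ r := h2
    omega
  constructor
  · rintro ⟨hcov, hpack⟩
    constructor
    · -- sphere count
      have hdisjS : ∀ c₁ ∈ CF, ∀ c₂ ∈ CF, c₁ ≠ c₂ → Disjoint (S c₁) (S c₂) := by
        intro c₁ h1 c₂ h2 hne
        rw [hCF, Finset.mem_filter] at h1 h2
        rw [Finset.disjoint_left]
        intro x hx1 hx2
        rw [hS] at hx1 hx2
        simp only [Finset.mem_filter, Finset.mem_univ, true_and] at hx1 hx2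
        exact hpack c₁ h1.2 c₂ h2.2 hne x ⟨hx1, hx2⟩
      have hunion : CF.biUnion S = Finset.univ := by
        apply Finset.eq_univ_of_forall
        intro x
        obtain ⟨c, hc, hcx⟩ := hcov x
        rw [Finset.mem_biUnion]
        exact ⟨c, Finset.mem_filter.mpr ⟨Finset.mem_univ c, hc⟩, by simp [hS, hcx]⟩
      have hcards : CF.card * (S 0).card = 2 ^ n := by
        rw [← hspace, ← hunion, Finset.card_biUnion hdisjS]
        rw [Finset.sum_congr rfl (fun c _ => sphere_card le π c)]
        rw [Finset.sum_const, smul_eq_mul]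
      rw [hCFcard] at hcards
      have h2n : (2:ℕ) ^ n = 2 ^ k * 2 ^ (n - k) := by
        rw [← pow_add]; congr 1; omega
      rw [h2n] at hcards
      exact Nat.eq_of_mul_eq_mul_left (by positivity) hcards
    · -- minimum distance condition
      intro c hc hc0 x y hdisj hxy
      by_contra hcon
      push_neg at hcon
      obtain ⟨hx, hy⟩ := hcon
      apply hpack 0 C.zero_mem c hc (Ne.symm hc0) x
      constructor
      · rw [dP_zero]; omega
      · have : c - x = y := by rw [← hxy]; abel
        unfold dP
        rw [this]; omega
  · rintro ⟨hcard, hmin⟩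
    have hpack := packing_of_min hmin
    refine ⟨?_, hpack⟩
    -- covering from counting
    have hdisjS : ∀ c₁ ∈ CF, ∀ c₂ ∈ CF, c₁ ≠ c₂ → Disjoint (S c₁) (S c₂) := by
      intro c₁ h1 c₂ h2 hne
      rw [hCF, Finset.mem_filter] at h1 h2
      rw [Finset.disjoint_left]
      intro x hx1 hx2
      rw [hS] at hx1 hx2
      simp only [Finset.mem_filter, Finset.mem_univ, true_and] at hx1 hx2
      exact hpack c₁ h1.2 c₂ h2.2 hne x ⟨hx1, hx2⟩
    have hcards : (CF.biUnion S).card = 2 ^ n := by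
      rw [Finset.card_biUnion hdisjS]
      rw [Finset.sum_congr rfl (fun c _ => sphere_card le π c)]
      rw [Finset.sum_const, smul_eq_mul, hCFcard, hcard, ← pow_add]
      congr 1; omega
    have huniv : CF.biUnion S = Finset.univ := by
      apply Finset.eq_univ_of_card
      rw [hcards]
      simp [ZMod.card]
    intro x
    have hx : x ∈ CF.biUnion S := huniv ▸ Finset.mem_univ x
    rw [Finset.mem_biUnion] at hx
    obtain ⟨c, hc, hcx⟩ := hx
    rw [hCF, Finset.mem_filter] at hc
    rw [hS] at hcx
    simp only [Finset.mem_filter, Finset.mem_univ, true_and] at hcx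
    exact ⟨c, hc.2, hcx⟩
end

section
/- Let G be a digraph on {1,…,n} and let C ⊆ 𝔽₂ⁿ be a binary linear code of dimension k. Then C is an r-perfect G-code if and only if both of the following hold: (i) |S_G(0;r)| = 2^{n−k}; and (ii) for every nonzero codeword c ∈ C and every way of writing the support of c as a disjoint union of two subsets, with x and y the vectors supported on the two parts (so x + y = c), either w_G(x) ≥ r+1 or w_G(y) ≥ r+1. -/
open Classical

/-! The packing condition says that no nonzero codeword `c` splits as `x + y` with both `x` and
`y` of `G`-weight at most `r`: such a split puts `x` in the spheres around `0` and around `c`.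
Conversely a point `z` near two codewords `c₁, c₂` splits `c₁ - c₂` along the support of
`z - c₂`. Given packing, the spheres around the `2 ^ k` codewords are disjoint translates of
`S_G(0; r)`, so they cover `𝔽₂ⁿ` exactly when `|S_G(0; r)| * 2 ^ k = 2 ^ n`. -/

open Finset

section Counting

variable {β : Type*} [Fintype β] {d : β → β → ℕ} {C : Finset β} {r m : ℕ}

theorem isCovering_iff_card_mul_eq_card (hball : ∀ c ∈ C, #{x | d c x ≤ r} = m)
    (hpack : IsPacking d C r) :
    IsCovering d C r ↔ #C * m = Fintype.card β := by
  have hcard : #(C.biUnion fun c => {x | d c x ≤ r}) = #C * m := by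
    rw [card_biUnion, sum_congr rfl hball, sum_const, smul_eq_mul]
    intro c₁ h₁ c₂ h₂ hne
    rw [Function.onFun, disjoint_left]
    intro x hx₁ hx₂
    exact hpack c₁ h₁ c₂ h₂ hne x ⟨(mem_filter.mp hx₁).2, (mem_filter.mp hx₂).2⟩
  rw [← hcard, card_eq_iff_eq_univ, eq_univ_iff_forall]
  simp only [IsCovering, mem_biUnion, mem_filter, mem_univ, true_and, mem_coe]

end Counting

section GWeight

variable {V : Type*} [Fintype V] (E : V → V → Prop)

theorem wtG_mono {x a : V → ZMod 2} (h : Function.support x ⊆ Function.support a) :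
    wtG E x ≤ wtG E a := by
  refine card_le_card fun v hv => ?_
  simp only [mem_filter, mem_univ, true_and] at hv ⊢
  obtain ⟨u, hu, hreach⟩ := hv
  exact ⟨u, h hu, hreach⟩

theorem wtG_neg (x : V → ZMod 2) : wtG E (-x) = wtG E x := by
  simp only [wtG, Pi.neg_apply, neg_ne_zero]

theorem dG_comm (x y : V → ZMod 2) : dG E x y = dG E y x := by
  rw [dG, dG, ← neg_sub, wtG_neg]

theorem dG_zero_left (y : V → ZMod 2) : dG E 0 y = wtG E y := by
  rw [dG, zero_sub, wtG_neg]

theorem card_sphere_eq_card_sphere_zero [DecidableEq V] (c : V → ZMod 2) (r : ℕ) :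
    #{x | dG E c x ≤ r} = #{x | dG E 0 x ≤ r} := by
  refine card_bij' (fun x _ => x - c) (fun x _ => x + c) (fun x hx => ?_) (fun x hx => ?_)
    (fun x _ => sub_add_cancel x c) (fun x _ => add_sub_cancel_right x c) <;>
  simp only [mem_filter, mem_univ, true_and] at hx ⊢ <;>
  rw [dG] at hx ⊢
  · rwa [zero_sub, neg_sub]
  · rwa [sub_add_cancel_right, ← zero_sub]

end GWeight

theorem exists_disjoint_split_support_subset {V M : Type*} [AddGroup M] (c b : V → M) :
    ∃ x y : V → M, (∀ i, x i = 0 ∨ y i = 0) ∧ x + y = c ∧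
      Function.support x ⊆ Function.support (c - b) ∧
      Function.support y ⊆ Function.support b := by
  refine ⟨fun i => if b i = 0 then c i else 0, fun i => if b i = 0 then 0 else c i,
    fun i => ?_, funext fun i => ?_, fun i hi => ?_, fun i hi => ?_⟩ <;>
  by_cases hb : b i = 0 <;> simp_all

theorem isPacking_dG_iff {V : Type*} [Fintype V] (E : V → V → Prop)
    (C : Submodule (ZMod 2) (V → ZMod 2)) (r : ℕ) :
    IsPacking (dG E) (C : Set (V → ZMod 2)) r ↔
      ∀ c ∈ C, c ≠ 0 → ∀ x y : V → ZMod 2,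
        (∀ i, x i = 0 ∨ y i = 0) → x + y = c →
        r + 1 ≤ wtG E x ∨ r + 1 ≤ wtG E y := by
  constructor
  · intro hpack c hc hc0 x y _ hxy
    by_contra! hsmall
    refine hpack c hc 0 C.zero_mem hc0 x ⟨?_, ?_⟩
    · rw [dG, ← hxy, add_sub_cancel_left]
      omega
    · rw [dG_zero_left]
      omega
  · intro hsplit c₁ hc₁ c₂ hc₂ hne z ⟨hz₁, hz₂⟩
    obtain ⟨x, y, hdisj, hxy, hx, hy⟩ := exists_disjoint_split_support_subset (c₁ - c₂) (z - c₂)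
    have hwx : wtG E x ≤ r := (wtG_mono E hx).trans (by rwa [sub_sub_sub_cancel_right])
    have hwy : wtG E y ≤ r := (wtG_mono E hy).trans (by rwa [dG_comm] at hz₂)
    rcases hsplit _ (C.sub_mem hc₁ hc₂) (sub_ne_zero.mpr hne) x y hdisj hxy with h | h <;>
      omega

theorem card_submodule_zmod_two {M : Type*} [AddCommGroup M] [Module (ZMod 2) M] [Fintype M]
    (C : Submodule (ZMod 2) M) :
    #(C : Set M).toFinset = 2 ^ Module.finrank (ZMod 2) C := by
  calc #(C : Set M).toFinset = Fintype.card C := by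
        rw [Set.toFinset_card]
        exact Fintype.card_congr (Equiv.refl _)
    _ = 2 ^ Module.finrank (ZMod 2) C := by
        rw [Module.card_eq_pow_finrank (K := ZMod 2), ZMod.card]

theorem stmt_9_general {n k r : ℕ} (E : Fin n → Fin n → Prop)
    (C : Submodule (ZMod 2) (Fin n → ZMod 2))
    (hk : Module.finrank (ZMod 2) C = k) :
    (IsCovering (dG E) (C : Set (Fin n → ZMod 2)) r ∧
        IsPacking (dG E) (C : Set (Fin n → ZMod 2)) r) ↔
      ((Finset.univ.filter (fun y : Fin n → ZMod 2 => dG E 0 y ≤ r)).card = 2 ^ (n - k) ∧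
        ∀ c ∈ C, c ≠ 0 → ∀ x y : Fin n → ZMod 2,
          (∀ i, x i = 0 ∨ y i = 0) → x + y = c →
          r + 1 ≤ wtG E x ∨ r + 1 ≤ wtG E y) := by
  have hkn : k ≤ n := by
    simpa only [hk, Module.finrank_fin_fun] using Submodule.finrank_le C
  rw [← isPacking_dG_iff, and_congr_left_iff]
  intro hpack
  have hcov := isCovering_iff_card_mul_eq_card (C := (C : Set (Fin n → ZMod 2)).toFinset)
    (fun c _ => card_sphere_eq_card_sphere_zero E c r) (by rwa [Set.coe_toFinset])
  have h2n : 2 ^ n = 2 ^ k * 2 ^ (n - k) := by rw [← pow_add, Nat.add_sub_cancel' hkn]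
  rw [Set.coe_toFinset, card_submodule_zmod_two, hk, Fintype.card_fun, ZMod.card,
    Fintype.card_fin, h2n] at hcov
  rw [hcov, Nat.mul_right_inj (by positivity)]

theorem stmt_9 {n k r : ℕ} (E : Fin n → Fin n → Prop) (hirrefl : ∀ v, ¬ E v v)
    (C : Submodule (ZMod 2) (Fin n → ZMod 2))
    (hk : Module.finrank (ZMod 2) C = k) :
    (IsCovering (dG E) (C : Set (Fin n → ZMod 2)) r ∧
        IsPacking (dG E) (C : Set (Fin n → ZMod 2)) r) ↔
      ((Finset.univ.filter (fun y : Fin n → ZMod 2 => dG E 0 y ≤ r)).card = 2 ^ (n - k) ∧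
        ∀ c ∈ C, c ≠ 0 → ∀ x y : Fin n → ZMod 2,
          (∀ i, x i = 0 ∨ y i = 0) → x + y = c →
          r + 1 ≤ wtG E x ∨ r + 1 ≤ wtG E y) :=
  stmt_9_general E C hk
end

section
/- Let k ≥ 2 and let P_π be a weighted poset on {1,…,2^k}. The extended binary Hamming code H̃_k is a 2-packing P_π-code if and only if for every codeword c of H̃_k with w_{P_π}(c) = 4 and every partition of the support of c into two subsets x and y each of Hamming weight 2, either w_{P_π}(x) ≥ 3 or w_{P_π}(y) ≥ 3. -/
/-!
If two distinct codewords `c₁, c₂` are both within distance `2` of `z`, put `u = c₁ - z` and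
`v = c₂ - z`. Then `u + v = c₁ - c₂` is a nonzero codeword, so `4 ≤ w_H(u + v) ≤ w_P(u + v)`,
while `w_P(u + v) ≤ w_P(u) + w_P(v) ≤ 4` with a loss of `π i` for every common point `i` of the
ideals of `u` and `v`. Hence all these inequalities are equalities: `u + v` is a codeword of
poset weight `4` split into the disjoint pieces `u, v` of Hamming weight `2` and poset weight `2`,
which is exactly what the condition forbids. Conversely, a codeword `c = x + y` of poset weight `4`
with `w_P(x), w_P(y) ≤ 2` makes `x` a common point of the spheres around `0` and `c`.
-/

open Classical

def extHamming (k : ℕ) : Set (Fin (2 ^ k) → ZMod 2) :=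
  {x | (∑ i, x i) = 0 ∧
    ∀ j < k, (∑ i ∈ Finset.univ.filter (fun i : Fin (2 ^ k) => Nat.testBit i.val j), x i) = 0}

noncomputable def wH {α : Type*} [Fintype α] (x : α → ZMod 2) : ℕ :=
  (Finset.univ.filter (fun i => x i ≠ 0)).card

section WeightedPoset

variable {α : Type*} [Fintype α] (le : α → α → Prop) (π : α → ℕ)

/-- The ideal `⟨x⟩_P` generated by the support of `x`. -/
noncomputable def downClosure (x : α → ZMod 2) : Finset α :=
  Finset.univ.filter fun j => ∃ i, x i ≠ 0 ∧ le j i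

variable {le π}

lemma wtP_eq_sum_downClosure (x : α → ZMod 2) : wtP le π x = ∑ j ∈ downClosure le x, π j :=
  rfl

@[simp]
lemma wtP_zero : wtP le π 0 = 0 := by
  simp [wtP]

@[simp]
lemma wtP_neg (x : α → ZMod 2) : wtP le π (-x) = wtP le π x := by
  simp [wtP]

lemma downClosure_add_subset (u v : α → ZMod 2) :
    downClosure le (u + v) ⊆ downClosure le u ∪ downClosure le v := by
  intro j hj
  simp only [downClosure, Finset.mem_union, Finset.mem_filter, Finset.mem_univ, true_and] at hj ⊢
  obtain ⟨i, hi, hji⟩ := hj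
  rcases Function.support_add u v hi with hu | hv
  · exact Or.inl ⟨i, hu, hji⟩
  · exact Or.inr ⟨i, hv, hji⟩

lemma wtP_add_add_sum_inter_le (u v : α → ZMod 2) :
    wtP le π (u + v) + ∑ j ∈ downClosure le u ∩ downClosure le v, π j ≤
      wtP le π u + wtP le π v := by
  rw [wtP_eq_sum_downClosure, wtP_eq_sum_downClosure, wtP_eq_sum_downClosure,
    ← Finset.sum_union_inter (s₁ := downClosure le u)]
  exact Nat.add_le_add_right (Finset.sum_le_sum_of_subset (downClosure_add_subset u v)) _

lemma wtP_add_le (u v : α → ZMod 2) : wtP le π (u + v) ≤ wtP le π u + wtP le π v :=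
  le_of_add_le_left (wtP_add_add_sum_inter_le u v)

lemma wtP_add_add_le_of_ne_zero (hrefl : ∀ i, le i i) {u v : α → ZMod 2} {i : α}
    (hu : u i ≠ 0) (hv : v i ≠ 0) : wtP le π (u + v) + π i ≤ wtP le π u + wtP le π v := by
  refine le_trans (Nat.add_le_add_left ?_ _) (wtP_add_add_sum_inter_le u v)
  refine Finset.single_le_sum (fun _ _ => Nat.zero_le _) ?_
  simp only [downClosure, Finset.mem_inter, Finset.mem_filter, Finset.mem_univ, true_and]
  exact ⟨⟨i, hu, hrefl i⟩, ⟨i, hv, hrefl i⟩⟩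

lemma wH_le_wtP (hrefl : ∀ i, le i i) (hπ : ∀ i, 0 < π i) (x : α → ZMod 2) :
    wH x ≤ wtP le π x :=
  calc wH x ≤ (downClosure le x).card := by
        refine Finset.card_le_card fun i hi => ?_
        simp only [downClosure, Finset.mem_filter, Finset.mem_univ, true_and] at hi ⊢
        exact ⟨i, hi, hrefl i⟩
    _ = ∑ j ∈ downClosure le x, 1 := Finset.card_eq_sum_ones _
    _ ≤ wtP le π x := Finset.sum_le_sum fun i _ => hπ i

end WeightedPoset

section HammingWeight

variable {α : Type*} [Fintype α]

lemma wH_add_le (u v : α → ZMod 2) : wH (u + v) ≤ wH u + wH v :=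
  calc wH (u + v) ≤ 
        (Finset.univ.filter (fun i => u i ≠ 0) ∪ Finset.univ.filter (fun i => v i ≠ 0)).card := by
        refine Finset.card_le_card fun i hi => ?_
        simp only [Finset.mem_union, Finset.mem_filter, Finset.mem_univ, true_and] at hi ⊢
        exact Function.support_add u v hi
    _ ≤ wH u + wH v := Finset.card_union_le _ _

lemma natCast_wH_eq_sum (x : α → ZMod 2) : (wH x : ZMod 2) = ∑ i, x i :=
  calc (wH x : ZMod 2) = ∑ i ∈ Finset.univ.filter (fun i => x i ≠ 0), 1 := by simp [wH]
    _ = ∑ i ∈ Finset.univ.filter (fun i => x i ≠ 0), x i :=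
      Finset.sum_congr rfl fun i hi => (Fin.eq_one_of_ne_zero _ (Finset.mem_filter.mp hi).2).symm
    _ = ∑ i, x i := Finset.sum_filter_ne_zero _

end HammingWeight

section ExtendedHamming

lemma zero_mem_extHamming (k : ℕ) : 0 ∈ extHamming k := by
  simp [extHamming]

lemma sub_mem_extHamming {k : ℕ} {a b : Fin (2 ^ k) → ZMod 2} (ha : a ∈ extHamming k)
    (hb : b ∈ extHamming k) : a - b ∈ extHamming k := by
  refine ⟨?_, fun j hj => ?_⟩
  · simp only [Pi.sub_apply, Finset.sum_sub_distrib, ha.1, hb.1, sub_zero]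
  · simp only [Pi.sub_apply, Finset.sum_sub_distrib, ha.2 j hj, hb.2 j hj, sub_zero]

lemma two_dvd_wH_of_mem_extHamming {k : ℕ} {c : Fin (2 ^ k) → ZMod 2} (hc : c ∈ extHamming k) :
    2 ∣ wH c :=
  (ZMod.natCast_eq_zero_iff _ _).mp ((natCast_wH_eq_sum c).trans hc.1)

lemma eq_of_mem_extHamming_of_support_eq_pair {k : ℕ} {c : Fin (2 ^ k) → ZMod 2}
    (hc : c ∈ extHamming k) {a b : Fin (2 ^ k)} (hsupp : ∀ i, c i ≠ 0 ↔ i = a ∨ i = b) :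
    a = b := by
  by_contra hab
  have hca : c a = 1 := Fin.eq_one_of_ne_zero _ ((hsupp a).mpr (Or.inl rfl))
  have hcb : c b = 1 := Fin.eq_one_of_ne_zero _ ((hsupp b).mpr (Or.inr rfl))
  refine hab (Fin.ext (Nat.eq_of_testBit_eq fun j => ?_))
  by_cases hj : j < k
  · have hbit := hc.2 j hj
    rw [Finset.sum_filter, Fintype.sum_eq_add a b hab fun i hi => ?_, hca, hcb] at hbit
    · split_ifs at hbit <;> simp_all
    · have : c i = 0 := by simpa [hi.1, hi.2] using hsupp i
      simp [this]
  · have hkj : 2 ^ k ≤ 2 ^ j := Nat.pow_le_pow_right two_pos (not_lt.mp hj)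
    rw [Nat.testBit_lt_two_pow (a.isLt.trans_le hkj), Nat.testBit_lt_two_pow (b.isLt.trans_le hkj)]

lemma four_le_wH_of_mem_extHamming {k : ℕ} {c : Fin (2 ^ k) → ZMod 2} (hc : c ∈ extHamming k)
    (hne : c ≠ 0) : 4 ≤ wH c := by
  have hpos : wH c ≠ 0 := hammingNorm_ne_zero_iff.mpr hne
  have htwo : wH c ≠ 2 := by
    intro h2
    obtain ⟨a, b, hab, hs⟩ := Finset.card_eq_two.mp h2
    refine hab (eq_of_mem_extHamming_of_support_eq_pair hc fun i => ?_)
    simpa using Finset.ext_iff.mp hs i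
  have := two_dvd_wH_of_mem_extHamming hc
  omega

end ExtendedHamming

theorem stmt_10_general {k : ℕ}
    (le : Fin (2 ^ k) → Fin (2 ^ k) → Prop)
    (hrefl : ∀ i, le i i)
    (π : Fin (2 ^ k) → ℕ) (hπ : ∀ i, 0 < π i) :
    IsPacking (dP le π) (extHamming k) 2 ↔
      ∀ c ∈ extHamming k, wtP le π c = 4 →
        ∀ x y : Fin (2 ^ k) → ZMod 2,
          (∀ i, x i = 0 ∨ y i = 0) → x + y = c → wH x = 2 → wH y = 2 →
          3 ≤ wtP le π x ∨ 3 ≤ wtP le π y := by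
  constructor
  · intro hpack c hc hc4 x y _ hxy _ _
    by_contra! hsmall
    have hc0 : 0 ≠ c := by
      rintro rfl
      simp at hc4
    refine hpack 0 (zero_mem_extHamming k) c hc hc0 x ⟨?_, ?_⟩
    · rw [dP, zero_sub, wtP_neg]
      omega
    · rw [dP, ← hxy, add_sub_cancel_left]
      omega
  · rintro hcond c₁ h₁ c₂ h₂ hne z ⟨hu, hv⟩
    unfold dP at hu hv
    set u := c₁ - z
    set v := c₂ - z
    have huv : u + v = c₁ - c₂ := by rw [← CharTwo.sub_eq_add, sub_sub_sub_cancel_right]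
    have hc : u + v ∈ extHamming k := huv ▸ sub_mem_extHamming h₁ h₂
    have hwH : 4 ≤ wH (u + v) := four_le_wH_of_mem_extHamming hc (huv ▸ sub_ne_zero.mpr hne)
    have hwtP := wH_le_wtP hrefl hπ (u + v)
    have hdisj : ∀ i, u i = 0 ∨ v i = 0 := by
      by_contra! ⟨i, hui, hvi⟩
      have hloss := wtP_add_add_le_of_ne_zero (π := π) hrefl hui hvi
      have hπi := hπ i
      omega
    have hwtP_add := wtP_add_le (le := le) (π := π) u v
    have hwH_add := wH_add_le u v
    have hwtPu := wH_le_wtP hrefl hπ u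
    have hwtPv := wH_le_wtP hrefl hπ v
    rcases hcond (u + v) hc (by omega) u v hdisj rfl (by omega) (by omega) with h | h <;> omega

theorem stmt_10 {k : ℕ} (hk : 2 ≤ k)
    (le : Fin (2 ^ k) → Fin (2 ^ k) → Prop)
    (hrefl : ∀ i, le i i)
    (hantisymm : ∀ i j, le i j → le j i → i = j)
    (htrans : ∀ i j l, le i j → le j l → le i l)
    (π : Fin (2 ^ k) → ℕ) (hπ : ∀ i, 0 < π i) :
    IsPacking (dP le π) (extHamming k) 2 ↔
      ∀ c ∈ extHamming k, wtP le π c = 4 →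
        ∀ x y : Fin (2 ^ k) → ZMod 2,
          (∀ i, x i = 0 ∨ y i = 0) → x + y = c → wH x = 2 → wH y = 2 →
          3 ≤ wtP le π x ∨ 3 ≤ wtP le π y :=
  stmt_10_general le hrefl π hπ
end

section
/- For a weighted poset P_π on {1,…,n} and any x ∈ 𝔽₂ⁿ and integer r ≥ 0, the sphere of radius r satisfies |S_{P_π}(x;r)| = 1 + Σ_{ω=1}^{r} Σ_{i=1}^{ω} Σ_{j=1}^{i} 2^{i−j} · Ω_j^ω(i), where Ω_j^ω(i) denotes the number of order ideals of P_π of cardinality i, total weight ω, and having exactly j maximal elements. In particular the sphere size does not depend on the center x. -/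
open Classical

noncomputable def Omega {α : Type*} [Fintype α] (le : α → α → Prop) (π : α → ℕ)
    (j ω i : ℕ) : ℕ :=
  (Finset.univ.filter (fun I : Finset α =>
      (∀ a ∈ I, ∀ b, le b a → b ∈ I) ∧
      I.card = i ∧ (∑ a ∈ I, π a) = ω ∧
      (I.filter (fun a => ∀ b ∈ I, le a b → a = b)).card = j)).card

/-!
Translating by `x` and replacing a vector by its support identifies the sphere with the family
of subsets `S` whose down-closure has weight at most `r`. The subsets with a given down-closure
`I` are exactly those lying between the maximal elements of `I` and `I`, so there are
`2 ^ (#I - #(maximals I))` of them. Grouping the ideals by weight, size and number of maximal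
elements gives the formula: the empty ideal contributes the `1`, and for a nonempty ideal
positivity of the weights gives `1 ≤ j ≤ i ≤ ω`.
-/

open Finset

namespace WeightedPoset

variable {α : Type*} (le : α → α → Prop)

def IsDownClosed (I : Finset α) : Prop := ∀ a ∈ I, ∀ b, le b a → b ∈ I

noncomputable def maximals (I : Finset α) : Finset α := I.filter fun a => ∀ b ∈ I, le a b → a = b

variable {le}

lemma mem_maximals {I : Finset α} {a : α} :
    a ∈ maximals le I ↔ a ∈ I ∧ ∀ b ∈ I, le a b → a = b := mem_filter

lemma maximals_subset (I : Finset α) : maximals le I ⊆ I := filter_subset _ _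

lemma exists_le_mem_maximals [IsPartialOrder α le] {I : Finset α} {a : α} (ha : a ∈ I) :
    ∃ m ∈ maximals le I, le a m := by
  let _ : PartialOrder α :=
    { le := le, le_refl := refl_of le, le_trans := fun _ _ _ => trans_of le,
      le_antisymm := fun _ _ => antisymm }
  obtain ⟨m, ham, hm⟩ := I.exists_le_maximal ha
  exact ⟨m, mem_maximals.2 ⟨hm.1, fun b hb hmb => antisymm hmb (hm.2 hb hmb)⟩, ham⟩

lemma maximals_nonempty [IsPartialOrder α le] {I : Finset α} (hI : I.Nonempty) :
    (maximals le I).Nonempty :=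
  let ⟨_, ha⟩ := hI
  let ⟨m, hm, _⟩ := exists_le_mem_maximals (le := le) ha
  ⟨m, hm⟩

lemma card_le_sum_of_pos {π : α → ℕ} (hπ : ∀ a, 0 < π a) (I : Finset α) :
    #I ≤ ∑ a ∈ I, π a := by
  simpa using I.card_nsmul_le_sum π 1 fun a _ => hπ a

variable [Fintype α]

variable (le) in
noncomputable def downClosure (S : Finset α) : Finset α := univ.filter fun b => ∃ a ∈ S, le b a

lemma isDownClosed_downClosure [IsTrans α le] (S : Finset α) :
    IsDownClosed le (downClosure le S) := by
  intro a ha b hba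
  simp only [downClosure, mem_filter, mem_univ, true_and] at ha ⊢
  obtain ⟨c, hc, hac⟩ := ha
  exact ⟨c, hc, trans_of le hba hac⟩

lemma downClosure_eq_iff [IsPartialOrder α le] {I S : Finset α} (hI : IsDownClosed le I) :
    downClosure le S = I ↔ maximals le I ⊆ S ∧ S ⊆ I := by
  constructor
  · rintro rfl
    refine ⟨fun m hm => ?_, fun a ha => ?_⟩
    · obtain ⟨hmI, hmax⟩ := mem_maximals.1 hm
      simp only [downClosure, mem_filter, mem_univ, true_and] at hmI
      obtain ⟨a, ha, hma⟩ := hmI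
      have haS : a ∈ downClosure le S := by simpa [downClosure] using ⟨a, ha, refl_of le a⟩
      rwa [hmax a haS hma]
    · simpa [downClosure] using ⟨a, ha, refl_of le a⟩
  · rintro ⟨hMS, hSI⟩
    ext b
    simp only [downClosure, mem_filter, mem_univ, true_and]
    constructor
    · rintro ⟨a, ha, hba⟩
      exact hI a (hSI ha) b hba
    · intro hb
      obtain ⟨m, hm, hbm⟩ := exists_le_mem_maximals (le := le) hb
      exact ⟨m, hMS hm, hbm⟩

lemma card_filter_downClosure_eq [IsPartialOrder α le] {I : Finset α} (hI : IsDownClosed le I) :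
    #{S | downClosure le S = I} = 2 ^ (#I - #(maximals le I)) := by
  rw [← card_Icc_finset (maximals_subset I)]
  congr 1
  ext S
  simp [downClosure_eq_iff hI]

noncomputable def supportEquiv : (α → ZMod 2) ≃ Finset α where
  toFun z := {a | z a ≠ 0}
  invFun S a := if a ∈ S then 1 else 0
  left_inv z := funext fun a => by
    by_cases h : z a = 0
    · simp [h]
    · refine (if_pos (by simpa using h)).trans ?_
      exact (Fin.eq_one_of_ne_zero (z a) h).symm
  right_inv S := by ext; simp

lemma wtP_eq_sum_downClosure (π : α → ℕ) (z : α → ZMod 2) :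
    wtP le π z = ∑ a ∈ downClosure le (supportEquiv z), π a := by
  simp [wtP, downClosure, supportEquiv]

variable (π : α → ℕ)

variable (le) in
noncomputable def downClosedOfWeightLE (r : ℕ) : Finset (Finset α) :=
  {I | IsDownClosed le I ∧ ∑ a ∈ I, π a ≤ r}

lemma mem_downClosedOfWeightLE {r : ℕ} {I : Finset α} :
    I ∈ downClosedOfWeightLE le π r ↔ IsDownClosed le I ∧ ∑ a ∈ I, π a ≤ r := by
  simp [downClosedOfWeightLE]

lemma card_filter_dP_le [DecidableEq α] (x : α → ZMod 2) (r : ℕ) :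
    #{y | dP le π x y ≤ r} = #{S : Finset α | ∑ a ∈ downClosure le S, π a ≤ r} :=
  card_equiv ((Equiv.subLeft x).trans supportEquiv) fun y => by
    simp [dP, wtP_eq_sum_downClosure]

lemma card_filter_sum_downClosure_le [IsPartialOrder α le] (r : ℕ) :
    #{S : Finset α | ∑ a ∈ downClosure le S, π a ≤ r} =
      ∑ I ∈ downClosedOfWeightLE le π r, 2 ^ (#I - #(maximals le I)) := by
  rw [card_eq_sum_card_fiberwise fun S hS => mem_coe.2 <| (mem_downClosedOfWeightLE π).2
    ⟨isDownClosed_downClosure S, (mem_filter.1 hS).2⟩]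
  refine sum_congr rfl fun I hI => ?_
  obtain ⟨hI, hIr⟩ := (mem_downClosedOfWeightLE π).1 hI
  rw [← card_filter_downClosure_eq hI]
  congr 1
  ext S
  simp only [mem_filter, mem_univ, true_and, and_iff_right_iff_imp]
  rintro rfl
  exact hIr

lemma omega_eq (j ω i : ℕ) :
    Omega le π j ω i =
      #{I | IsDownClosed le I ∧ #I = i ∧ ∑ a ∈ I, π a = ω ∧ #(maximals le I) = j} := by
  unfold Omega IsDownClosed maximals
  congr!

lemma card_filter_erase_empty_eq_omega [DecidableEq α] {r ω i : ℕ} (hωr : ω ≤ r) (hi : 1 ≤ i)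
    (j : ℕ) :
    #{I ∈ (downClosedOfWeightLE le π r).erase ∅ |
        ∑ a ∈ I, π a = ω ∧ #I = i ∧ #(maximals le I) = j} = Omega le π j ω i := by
  rw [omega_eq]
  congr 1
  ext I
  simp only [mem_filter, mem_erase, mem_downClosedOfWeightLE, mem_univ, true_and]
  constructor
  · rintro ⟨⟨-, hI, -⟩, hω, hi, hj⟩
    exact ⟨hI, hi, hω, hj⟩
  · rintro ⟨hI, rfl, rfl, rfl⟩
    exact ⟨⟨(card_pos.1 hi).ne_empty, hI, hωr⟩, rfl, rfl, rfl⟩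

lemma sum_erase_empty_eq_sum_omega [DecidableEq α] [IsPartialOrder α le] (hπ : ∀ a, 0 < π a)
    (g : ℕ → ℕ → ℕ) (r : ℕ) :
    ∑ I ∈ (downClosedOfWeightLE le π r).erase ∅, g #I #(maximals le I) =
      ∑ ω ∈ Icc 1 r, ∑ i ∈ Icc 1 ω, ∑ j ∈ Icc 1 i, g i j * Omega le π j ω i := by
  set s := (downClosedOfWeightLE le π r).erase ∅
  have hs : ∀ I ∈ s, I.Nonempty ∧ ∑ a ∈ I, π a ≤ r := fun I hI =>
    ⟨nonempty_iff_ne_empty.2 (ne_of_mem_erase hI),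
      ((mem_downClosedOfWeightLE π).1 (mem_of_mem_erase hI)).2⟩
  have hwt : ∀ I ∈ s, ∑ a ∈ I, π a ∈ Icc 1 r := fun I hI =>
    mem_Icc.2 ⟨(hs I hI).1.card_pos.trans_le (card_le_sum_of_pos hπ I), (hs I hI).2⟩
  rw [← sum_fiberwise_of_maps_to hwt]
  refine sum_congr rfl fun ω hω => ?_
  have hcard : ∀ I ∈ {I ∈ s | ∑ a ∈ I, π a = ω}, #I ∈ Icc 1 ω := by
    rintro I hI
    obtain ⟨hIs, rfl⟩ := mem_filter.1 hI
    exact mem_Icc.2 ⟨(hs I hIs).1.card_pos, card_le_sum_of_pos hπ I⟩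
  rw [← sum_fiberwise_of_maps_to hcard]
  refine sum_congr rfl fun i hi => ?_
  have hmax : ∀ I ∈ {I ∈ {I ∈ s | ∑ a ∈ I, π a = ω} | #I = i}, #(maximals le I) ∈ Icc 1 i := by
    intro I hI
    obtain ⟨⟨hIs, -⟩, rfl⟩ := mem_filter.1 hI |>.imp_left mem_filter.1
    exact mem_Icc.2 ⟨(maximals_nonempty (hs I hIs).1).card_pos,
      card_le_card (maximals_subset I)⟩
  rw [← sum_fiberwise_of_maps_to hmax]
  refine sum_congr rfl fun j _ => ?_
  rw [filter_filter, filter_filter, sum_const_nat (m := g i j) fun I hI => ?_, mul_comm,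
    card_filter_erase_empty_eq_omega π (mem_Icc.1 hω).2 (mem_Icc.1 hi).1]
  obtain ⟨-, -, rfl, rfl⟩ := mem_filter.1 hI
  rfl

end WeightedPoset

open WeightedPoset in
theorem stmt_13 {n : ℕ} (le : Fin n → Fin n → Prop)
    (hrefl : ∀ i, le i i)
    (hantisymm : ∀ i j, le i j → le j i → i = j)
    (htrans : ∀ i j l, le i j → le j l → le i l)
    (π : Fin n → ℕ) (hπ : ∀ i, 0 < π i)
    (x : Fin n → ZMod 2) (r : ℕ) :
    (Finset.univ.filter (fun y : Fin n → ZMod 2 => dP le π x y ≤ r)).card =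
      1 + ∑ ω ∈ Finset.Icc 1 r, ∑ i ∈ Finset.Icc 1 ω, ∑ j ∈ Finset.Icc 1 i,
        2 ^ (i - j) * Omega le π j ω i := by
  have : IsPartialOrder (Fin n) le :=
    { refl := hrefl, trans := htrans, antisymm := hantisymm }
  have empty_mem : ∅ ∈ downClosedOfWeightLE le π r :=
    (mem_downClosedOfWeightLE π).2 ⟨by simp [IsDownClosed], by simp⟩
  rw [card_filter_dP_le, card_filter_sum_downClosure_le, ← add_sum_erase _ _ empty_mem,
    sum_erase_empty_eq_sum_omega π hπ (fun i j => 2 ^ (i - j))]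
  simp
end

section
/- Let P_π be a weighted poset on {1,…,8}. If the extended binary Hamming code H̃₃ (the [8,4,4] extended Hamming code) is a 2-perfect P_π-code, then 1 ≤ Ω₁¹(1) ≤ 4, where Ω₁¹(1) is the number of minimal elements of P_π of weight 1. -/
open Classical

/-!
Let `M` be the set of minimal elements of weight one, so that `Ω₁¹(1) = |M|`.

If `M` were empty, a vector of P-weight at most `2` could have only one nonzero coordinate:
two of them would exhaust the weight budget, and one of the two would be minimal. So the
even-weight vector `e₀ + e₁ ∉ H̃₃` could not lie within distance `2` of a codeword, all of
which have even Hamming weight.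

If `|M| ≥ 5`, then `M` contains the support `p` of a weight-four codeword, since any five
coordinates do. For `q ⊆ p` with `|q| = 2`, the vector `1_q` then has P-weight `2` and lies
at distance `2` from both codewords `0` and `1_p`.
-/

namespace PosetCode

variable {α : Type*} [Fintype α] (le : α → α → Prop) (π : α → ℕ)

noncomputable def minWeightOne : Finset α :=
  Finset.univ.filter (fun a => π a = 1 ∧ ∀ b, le b a → b = a)

variable {le π}

theorem mem_minWeightOne {a : α} :
    a ∈ minWeightOne le π ↔ π a = 1 ∧ ∀ b, le b a → b = a := by
  simp [minWeightOne]

theorem omega_one_one_one : Omega le π 1 1 1 = (minWeightOne le π).card := by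
  rw [Omega, ← Finset.card_image_of_injective (minWeightOne le π) Finset.singleton_injective]
  refine congrArg Finset.card (Finset.ext fun I => ?_)
  simp only [Finset.mem_filter, Finset.mem_univ, true_and, Finset.mem_image, mem_minWeightOne]
  constructor
  · rintro ⟨hdown, hcard, hsum, -⟩
    obtain ⟨a, rfl⟩ := Finset.card_eq_one.mp hcard
    refine ⟨a, ⟨by simpa using hsum, fun b hb => ?_⟩, rfl⟩
    exact Finset.mem_singleton.mp (hdown a (Finset.mem_singleton_self a) b hb)
  · rintro ⟨a, ⟨hπa, hmin⟩, rfl⟩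
    refine ⟨?_, Finset.card_singleton a, by simpa using hπa, ?_⟩
    · simp only [Finset.mem_singleton]
      rintro x rfl b hb
      exact hmin b hb
    · rw [Finset.filter_true_of_mem (by simp), Finset.card_singleton]

theorem wtP_neg (v : α → ZMod 2) : wtP le π (-v) = wtP le π v := by
  simp only [wtP, Pi.neg_apply, neg_ne_zero]

theorem exists_mem_minWeightOne_of_wtP_le_two (hrefl : ∀ i, le i i)
    (hantisymm : ∀ i j, le i j → le j i → i = j) (hπ : ∀ i, 0 < π i)
    {v : α → ZMod 2} (hw : wtP le π v ≤ 2) {i₁ i₂ : α} (hne : i₁ ≠ i₂)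
    (h₁ : v i₁ ≠ 0) (h₂ : v i₂ ≠ 0) : (minWeightOne le π).Nonempty := by
  set D := Finset.univ.filter (fun j => ∃ i, v i ≠ 0 ∧ le j i)
  have hmem : ∀ {j i}, v i ≠ 0 → le j i → j ∈ D := fun hi hji =>
    Finset.mem_filter.mpr ⟨Finset.mem_univ _, _, hi, hji⟩
  have hsub : {i₁, i₂} ⊆ D := by
    simp only [Finset.insert_subset_iff, Finset.singleton_subset_iff]
    exact ⟨hmem h₁ (hrefl i₁), hmem h₂ (hrefl i₂)⟩
  have hcard : D.card ≤ 2 := calc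
    D.card = ∑ _j ∈ D, 1 := Finset.card_eq_sum_ones D
    _ ≤ ∑ j ∈ D, π j := Finset.sum_le_sum fun j _ => hπ j
    _ ≤ 2 := hw
  have hD : D = {i₁, i₂} :=
    (Finset.eq_of_subset_of_card_le hsub (by rwa [Finset.card_pair hne])).symm
  have hπ₁₂ : π i₁ + π i₂ ≤ 2 := by
    rw [← Finset.sum_pair hne, ← hD]
    exact hw
  have hbelow : ∀ {b i}, v i ≠ 0 → le b i → b = i₁ ∨ b = i₂ := fun hi hbi => by
    simpa [hD] using hmem hi hbi
  have := hπ i₁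
  have := hπ i₂
  by_cases hmin₁ : ∀ b, le b i₁ → b = i₁
  · exact ⟨i₁, mem_minWeightOne.mpr ⟨by omega, hmin₁⟩⟩
  obtain ⟨b, hb, hb₁⟩ : ∃ b, le b i₁ ∧ b ≠ i₁ := by simpa using hmin₁
  have h₂₁ : le i₂ i₁ := (hbelow h₁ hb).resolve_left hb₁ ▸ hb
  refine ⟨i₂, mem_minWeightOne.mpr ⟨by omega, fun c hc => ?_⟩⟩
  rcases hbelow h₂ hc with rfl | rfl
  · exact hantisymm c i₂ hc h₂₁
  · rfl

theorem exists_ne_ne_zero_of_sum_eq_zero {β : Type*} [AddCommMonoid β] {v : α → β}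
    (hsum : ∑ i, v i = 0) {i : α} (hi : v i ≠ 0) : ∃ j, j ≠ i ∧ v j ≠ 0 := by
  by_contra! h
  exact hi (by rw [← hsum, Finset.sum_eq_single i (fun j _ hj => h j hj) (by simp)])

theorem nonempty_minWeightOne_of_isCovering (hrefl : ∀ i, le i i)
    (hantisymm : ∀ i j, le i j → le j i → i = j) (hπ : ∀ i, 0 < π i)
    {C : Set (α → ZMod 2)} (hC : ∀ c ∈ C, ∑ i, c i = 0) {x : α → ZMod 2}
    (hx : ∑ i, x i = 0) (hxC : x ∉ C) (hcov : IsCovering (dP le π) C 2) :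
    (minWeightOne le π).Nonempty := by
  obtain ⟨c, hc, hcx⟩ := hcov x
  have hsum : ∑ i, (c - x) i = 0 := by
    simp [Finset.sum_sub_distrib, hC c hc, hx]
  obtain ⟨i, hi⟩ : ∃ i, (c - x) i ≠ 0 := by
    by_contra! h
    exact hxC (sub_eq_zero.mp (funext h) ▸ hc)
  obtain ⟨j, hji, hj⟩ := exists_ne_ne_zero_of_sum_eq_zero hsum hi
  exact exists_mem_minWeightOne_of_wtP_le_two hrefl hantisymm hπ hcx hji hj hi

variable [DecidableEq α]

def charVec (t : Finset α) : α → ZMod 2 := fun i => if i ∈ t then 1 else 0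

omit [Fintype α] in
theorem charVec_sub_of_subset {p q : Finset α} (h : q ⊆ p) :
    charVec p - charVec q = charVec (p \ q) := by
  funext i
  by_cases hq : i ∈ q
  · simp [charVec, hq, h hq]
  · by_cases hp : i ∈ p <;> simp [charVec, hq, hp]

theorem wtP_charVec (hrefl : ∀ i, le i i) {t : Finset α} (ht : t ⊆ minWeightOne le π) :
    wtP le π (charVec t) = t.card := by
  have hdown : Finset.univ.filter (fun j => ∃ i, charVec t i ≠ 0 ∧ le j i) = t := by
    ext j
    simp only [Finset.mem_filter, Finset.mem_univ, true_and, charVec, ne_eq,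
      ite_eq_right_iff, one_ne_zero, imp_false, not_not]
    refine ⟨fun ⟨i, hi, hji⟩ => ?_, fun hj => ⟨j, hj, hrefl j⟩⟩
    rwa [(mem_minWeightOne.mp (ht hi)).2 j hji]
  rw [wtP, hdown, Finset.card_eq_sum_ones]
  exact Finset.sum_congr rfl fun a ha => (mem_minWeightOne.mp (ht ha)).1

theorem not_isPacking_of_charVec_mem (hrefl : ∀ i, le i i) {C : Set (α → ZMod 2)}
    (h0 : 0 ∈ C) {p : Finset α} (hp : charVec p ∈ C) (hcard : p.card = 4)
    (hpM : p ⊆ minWeightOne le π) : ¬ IsPacking (dP le π) C 2 := by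
  intro hpack
  obtain ⟨q, hqp, hq⟩ := Finset.exists_subset_card_eq (show 2 ≤ p.card by omega)
  obtain ⟨a, ha⟩ : p.Nonempty := Finset.card_pos.mp (by omega)
  have hne : (0 : α → ZMod 2) ≠ charVec p := fun h => by
    simpa [charVec, ha] using congrFun h a
  refine hpack 0 h0 _ hp hne (charVec q) ⟨?_, ?_⟩
  · rw [dP, zero_sub, wtP_neg, wtP_charVec hrefl (hqp.trans hpM), hq]
  · rw [dP, charVec_sub_of_subset hqp, wtP_charVec hrefl (Finset.sdiff_subset.trans hpM),
      Finset.card_sdiff_of_subset hqp, hcard, hq]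

end PosetCode

open PosetCode

def extHamming3WeightFourSupports : List (Finset (Fin (2 ^ 3))) :=
  [{0,1,2,3},{0,1,4,5},{0,1,6,7},{0,2,4,6},{0,2,5,7},{0,3,4,7},{0,3,5,6},
   {1,2,4,7},{1,2,5,6},{1,3,4,6},{1,3,5,7},{2,3,4,5},{2,3,6,7},{4,5,6,7}]

set_option maxRecDepth 10000 in
theorem extHamming3WeightFourSupports_spec :
    ∀ p ∈ extHamming3WeightFourSupports, p.card = 4 ∧ charVec p ∈ extHamming 3 := by
  simp only [extHamming, Set.mem_ofPred_eq]
  decide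

set_option maxRecDepth 10000 in
theorem exists_weightFourSupport_subset :
    ∀ s : Finset (Fin (2 ^ 3)), s.card = 5 →
      ∃ p ∈ extHamming3WeightFourSupports, p ⊆ s := by
  decide

theorem stmt_15_general
    (le : Fin (2 ^ 3) → Fin (2 ^ 3) → Prop)
    (hrefl : ∀ i, le i i)
    (hantisymm : ∀ i j, le i j → le j i → i = j)
    (π : Fin (2 ^ 3) → ℕ) (hπ : ∀ i, 0 < π i)
    (hperf : IsCovering (dP le π) (extHamming 3) 2 ∧
      IsPacking (dP le π) (extHamming 3) 2) :
    1 ≤ Omega le π 1 1 1 ∧ Omega le π 1 1 1 ≤ 4 := by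
  rw [omega_one_one_one]
  constructor
  · exact Finset.card_pos.mpr (nonempty_minWeightOne_of_isCovering hrefl hantisymm hπ
      (fun c hc => hc.1) (x := charVec {0, 1}) (by decide)
      (by simp only [extHamming, Set.mem_ofPred_eq]; decide) hperf.1)
  · by_contra! h
    obtain ⟨s, hsM, hs⟩ :=
      Finset.exists_subset_card_eq (show 5 ≤ (minWeightOne le π).card by omega)
    obtain ⟨p, hp, hps⟩ := exists_weightFourSupport_subset s hs
    obtain ⟨hcard, hpC⟩ := extHamming3WeightFourSupports_spec p hp
    have h0 : (0 : Fin (2 ^ 3) → ZMod 2) ∈ extHamming 3 := ⟨by simp, fun _ _ => by simp⟩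
    exact not_isPacking_of_charVec_mem hrefl h0 hpC hcard (hps.trans hsM) hperf.2

theorem stmt_15
    (le : Fin (2 ^ 3) → Fin (2 ^ 3) → Prop)
    (hrefl : ∀ i, le i i)
    (hantisymm : ∀ i j, le i j → le j i → i = j)
    (htrans : ∀ i j l, le i j → le j l → le i l)
    (π : Fin (2 ^ 3) → ℕ) (hπ : ∀ i, 0 < π i)
    (hperf : IsCovering (dP le π) (extHamming 3) 2 ∧
      IsPacking (dP le π) (extHamming 3) 2) :
    1 ≤ Omega le π 1 1 1 ∧ Omega le π 1 1 1 ≤ 4 :=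
  stmt_15_general le hrefl hantisymm π hπ hperf
end

section
/- For every integer k ≥ 3, there exists a weighted poset P_π on {1,…,2^k} whose weight function π takes the value 2 on at least one element (so that P_π is not an ordinary poset) such that the extended binary Hamming code H̃_k is a 2-perfect P_π-code. -/
/-!
Label the positions by a bijection `σ : ι ≃ V` onto a `ZMod 2`-vector space. The code
`{x | ∑ xᵢ = 0 ∧ ∑ xᵢ • σ i = 0}` is the kernel of the parity-check map with columns `(1, σ i)`,
and `dP` is translation invariant, so the code is 2-perfect as soon as the parity-check map is a
bijection from the radius-2 ball around `0` onto `ZMod 2 × V`.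

Pick three distinct positions `a, b, c`, let `d` be the position labelled `σ a + σ b + σ c`, give
`d` weight 2 and every other position weight 1, and put `a` below every position outside
`{a, b, c, d}`. The radius-2 ball then consists of the unit vectors `eₜ`, with syndromes
`(1, σ t)`, and of the vectors `eₐ + eₛ` with `s ≠ d` together with `e_b + e_c`, with syndromes
`(0, u)`: every `u` is hit exactly once, `u = σ b + σ c` by `e_b + e_c` in place of the too heavy
`eₐ + e_d`. Labelling `Fin (2 ^ k)` by binary expansions gives the extended Hamming code.
-/

open Classical

open Finset

section StarPoset

variable {ι : Type*}

def starLE (a : ι) (S : Set ι) (j i : ι) : Prop :=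
  j = i ∨ (j = a ∧ i ∉ S)

variable {a : ι} {S : Set ι}

theorem starLE_refl (i : ι) : starLE a S i i :=
  Or.inl rfl

theorem starLE_antisymm {i j : ι} (hij : starLE a S i j) (hji : starLE a S j i) : i = j := by
  rcases hij with h | ⟨rfl, -⟩
  · exact h
  · rcases hji with h | ⟨rfl, -⟩
    · exact h.symm
    · rfl

theorem starLE_trans {i j l : ι} (hij : starLE a S i j) (hjl : starLE a S j l) :
    starLE a S i l := by
  rcases hij with rfl | ⟨rfl, hj⟩
  · exact hjl
  · rcases hjl with rfl | ⟨rfl, hl⟩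
    · exact Or.inr ⟨rfl, hj⟩
    · exact Or.inr ⟨rfl, hl⟩

end StarPoset

section WeightBounds

variable {α : Type*} [Fintype α] {le : α → α → Prop} {π : α → ℕ} {x : α → ZMod 2}
  {T : Finset α}

theorem wtP_le_sum (h : ∀ i j, x i ≠ 0 → le j i → j ∈ T) : wtP le π x ≤ ∑ j ∈ T, π j :=
  sum_le_sum_of_subset fun j hj => by
    obtain ⟨i, hi, hji⟩ := (mem_filter.1 hj).2
    exact h i j hi hji

theorem sum_le_wtP (h : ∀ j ∈ T, ∃ i, x i ≠ 0 ∧ le j i) : ∑ j ∈ T, π j ≤ wtP le π x :=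
  sum_le_sum_of_subset fun j hj => mem_filter.2 ⟨mem_univ j, h j hj⟩

end WeightBounds

section Kernel

variable {G M : Type*} [AddCommGroup G] [AddCommGroup M] (w : G → ℕ) (f : G →+ M) (r : ℕ)

theorem isCovering_ker (h : Set.SurjOn f {v | w v ≤ r} (Set.range f)) :
    IsCovering (fun x y => w (x - y)) (f.ker : Set G) r := by
  intro x
  obtain ⟨v, hv, hfv⟩ := h ⟨-x, rfl⟩
  refine ⟨x + v, ?_, by simpa using hv⟩
  simp [AddMonoidHom.mem_ker, hfv]

theorem isPacking_ker (h : Set.InjOn f {v | w v ≤ r}) :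
    IsPacking (fun x y => w (x - y)) (f.ker : Set G) r := by
  intro c₁ h₁ c₂ h₂ hne x ⟨hx₁, hx₂⟩
  refine hne (sub_left_injective (h hx₁ hx₂ ?_))
  simp_all [AddMonoidHom.mem_ker]

end Kernel

theorem sum_single_support {ι : Type*} [Fintype ι] (x : ι → ZMod 2) :
    ∑ i ∈ univ.filter (x · ≠ 0), Pi.single i (1 : ZMod 2) = x := by
  ext m
  rw [Finset.sum_apply]
  simp only [ne_eq, Pi.single_apply, sum_ite_eq, mem_filter, mem_univ, true_and, ite_not]
  generalize x m = t
  revert t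
  decide

theorem eq_or_eq_of_single_add_single_ne_zero {ι M : Type*} [AddMonoid M] {p q i : ι} {r s : M}
    (h : (Pi.single p r + Pi.single q s : ι → M) i ≠ 0) : i = p ∨ i = q := by
  by_contra! hne
  simp [hne.1, hne.2] at h

noncomputable section

section ParityCheck

variable {ι V : Type*} [Fintype ι] [AddCommGroup V] [Module (ZMod 2) V] (σ : ι → V)

def parityCheck : (ι → ZMod 2) →+ ZMod 2 × V :=
  (Fintype.linearCombination (ZMod 2) fun i => ((1 : ZMod 2), σ i)).toAddMonoidHom

theorem parityCheck_apply (x : ι → ZMod 2) :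
    parityCheck σ x = (∑ i, x i, ∑ i, x i • σ i) := by
  ext <;> simp [parityCheck, Fintype.linearCombination_apply, Prod.fst_sum, Prod.snd_sum]

theorem parityCheck_single (t : ι) : parityCheck σ (Pi.single t 1) = (1, σ t) := by
  simp [parityCheck, Fintype.linearCombination_apply_single]

end ParityCheck

section Construction

variable {ι V : Type*} [AddCommGroup V] (σ : ι ≃ V) (a b c : ι)

def apex : ι :=
  σ.symm (σ a + σ b + σ c)

def posetLE : ι → ι → Prop :=
  starLE a {a, b, c, apex σ a b c}

def posetWeight (i : ι) : ℕ :=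
  if i = apex σ a b c then 2 else 1

def evenLeader (u : V) : ι → ZMod 2 :=
  if u = σ b + σ c then Pi.single b 1 + Pi.single c 1
  else Pi.single a 1 + Pi.single (σ.symm (σ a + u)) 1

theorem sum_posetWeight (T : Finset ι) :
    ∑ i ∈ T, posetWeight σ a b c i = #T + if apex σ a b c ∈ T then 1 else 0 := by
  calc ∑ i ∈ T, posetWeight σ a b c i = ∑ i ∈ T, (1 + if i = apex σ a b c then 1 else 0) :=
        sum_congr rfl fun i _ => by unfold posetWeight; split_ifs <;> rfl
    _ = _ := by rw [sum_add_distrib, sum_ite_eq', card_eq_sum_ones]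

variable {σ a b c}

local notation "wt" => wtP (posetLE σ a b c) (posetWeight σ a b c)

theorem wtP_le_two_of_forall_le [Fintype ι] {x : ι → ZMod 2} {p q : ι}
    (hp : p ≠ apex σ a b c) (hq : q ≠ apex σ a b c)
    (h : ∀ i j, x i ≠ 0 → posetLE σ a b c j i → j = p ∨ j = q) :
    wt x ≤ 2 :=
  calc wt x ≤ ∑ j ∈ {p, q}, posetWeight σ a b c j :=
        wtP_le_sum fun i j hi hji => by simpa using h i j hi hji
    _ = #{p, q} := by simp [sum_posetWeight, hp.symm, hq.symm]
    _ ≤ 2 := card_le_two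

theorem evenLeader_mid_add_right :
    evenLeader σ a b c (σ b + σ c) = Pi.single b 1 + Pi.single c 1 :=
  if_pos rfl

variable [Module (ZMod 2) V]

theorem left_ne_apex (hbc : b ≠ c) : a ≠ apex σ a b c := by
  intro h
  rw [eq_comm, apex, Equiv.symm_apply_eq, add_assoc, add_eq_left, ← ZModModule.sub_eq_add,
    sub_eq_zero] at h
  exact hbc (σ.injective h)

theorem mid_ne_apex (hac : a ≠ c) : b ≠ apex σ a b c := by
  intro h
  rw [eq_comm, apex, Equiv.symm_apply_eq, add_right_comm, add_eq_right,
    ← ZModModule.sub_eq_add, sub_eq_zero] at h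
  exact hac (σ.injective h)

theorem right_ne_apex (hab : a ≠ b) : c ≠ apex σ a b c := by
  intro h
  rw [eq_comm, apex, Equiv.symm_apply_eq, add_eq_right, ← ZModModule.sub_eq_add,
    sub_eq_zero] at h
  exact hab (σ.injective h)

theorem evenLeader_zero (hbc : b ≠ c) : evenLeader σ a b c 0 = 0 := by
  have : (0 : V) ≠ σ b + σ c := by
    rw [ne_comm, ← ZModModule.sub_eq_add, sub_ne_zero]
    exact σ.injective.ne hbc
  simp [evenLeader, this, ZModModule.add_self]

theorem evenLeader_left_add {j : ι} (hj : j ≠ apex σ a b c) :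
    evenLeader σ a b c (σ a + σ j) = Pi.single a 1 + Pi.single j 1 := by
  have : σ a + σ j ≠ σ b + σ c := fun h => by
    rw [apex, ne_eq, Equiv.eq_symm_apply, add_assoc, ← h, ← add_assoc, ZModModule.add_self,
      zero_add] at hj
    exact hj rfl
  simp [evenLeader, this, ← add_assoc, ZModModule.add_self]

variable [Fintype ι]

theorem parityCheck_evenLeader (u : V) : parityCheck σ (evenLeader σ a b c u) = (0, u) := by
  unfold evenLeader
  split_ifs with hu
  · simp [parityCheck_single, hu, ZModModule.add_self]
  · simp [parityCheck_single, ← add_assoc, ZModModule.add_self]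

theorem wtP_single_le_two (hbc : b ≠ c) (t : ι) : wt (Pi.single t 1) ≤ 2 := by
  have hsupp : ∀ i, (Pi.single t 1 : ι → ZMod 2) i ≠ 0 → i = t := fun i hi => by
    by_contra h
    simp [h] at hi
  by_cases ht : t = apex σ a b c
  · calc wt (Pi.single t 1) ≤ ∑ j ∈ {t}, posetWeight σ a b c j := by
          refine wtP_le_sum fun i j hi hji => ?_
          obtain rfl := hsupp i hi
          rcases hji with rfl | ⟨-, hi⟩
          · exact mem_singleton_self _
          · simp [ht] at hi
      _ = 2 := by simp [posetWeight, ht]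
  · refine wtP_le_two_of_forall_le ht (left_ne_apex hbc) fun i j hi hji => ?_
    obtain rfl := hsupp i hi
    rcases hji with h | ⟨h, -⟩
    exacts [Or.inl h, Or.inr h]

theorem wtP_evenLeader_le_two (hab : a ≠ b) (hac : a ≠ c) (hbc : b ≠ c) (u : V) :
    wt (evenLeader σ a b c u) ≤ 2 := by
  unfold evenLeader
  split_ifs with hu
  · refine wtP_le_two_of_forall_le (mid_ne_apex hac) (right_ne_apex hab) fun i j hi hji => ?_
    rcases eq_or_eq_of_single_add_single_ne_zero hi with rfl | rfl <;>
    rcases hji with rfl | ⟨-, hi⟩ <;> simp_all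
  · have hs : σ.symm (σ a + u) ≠ apex σ a b c := by
      rwa [apex, σ.symm_apply_eq.ne, σ.apply_symm_apply, add_assoc, ne_eq, add_right_inj]
    refine wtP_le_two_of_forall_le (left_ne_apex hbc) hs fun i j hi hji => ?_
    rcases hji with rfl | ⟨rfl, -⟩
    · exact eq_or_eq_of_single_add_single_ne_zero hi
    · exact Or.inl rfl

theorem exists_evenLeader_eq_of_wtP_pair_le_two {i j : ι}
    (hij : i ≠ j) (hw : wt (Pi.single i 1 + Pi.single j 1) ≤ 2) :
    ∃ u, Pi.single i 1 + Pi.single j 1 = evenLeader σ a b c u := by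
  set x : ι → ZMod 2 := Pi.single i 1 + Pi.single j 1
  have hxi : x i ≠ 0 := by simp [x, hij.symm]
  have hxj : x j ≠ 0 := by simp [x, hij]
  have bound : ∀ T : Finset ι, (∀ l ∈ T, ∃ m, x m ≠ 0 ∧ posetLE σ a b c l m) →
      #T + (if apex σ a b c ∈ T then 1 else 0) ≤ 2 := fun T hT =>
    sum_posetWeight σ a b c T ▸ (sum_le_wtP hT).trans hw
  have hd : apex σ a b c ∉ ({i, j} : Finset ι) := by
    have := bound {i, j} (by simpa using ⟨⟨i, hxi, starLE_refl i⟩, ⟨j, hxj, starLE_refl j⟩⟩)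
    rw [card_pair hij] at this
    split_ifs at this with h
    · omega
    · exact h
  obtain ⟨hid, hjd⟩ : i ≠ apex σ a b c ∧ j ≠ apex σ a b c := by simpa [eq_comm] using hd
  by_cases hia : i = a
  · subst hia
    exact ⟨_, (evenLeader_left_add hjd).symm⟩
  by_cases hja : j = a
  · subst hja
    exact ⟨_, (add_comm _ _).trans (evenLeader_left_add hid).symm⟩
  -- A support element outside `{a, b, c, apex}` would put `a` into the down-set as a third point.
  have hS : ∀ l, x l ≠ 0 → l ∈ ({a, b, c, apex σ a b c} : Set ι) := by
    intro l hl
    by_contra hlS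
    have := bound {a, i, j} (by
      simpa using ⟨⟨l, hl, Or.inr ⟨rfl, hlS⟩⟩, ⟨i, hxi, starLE_refl i⟩, ⟨j, hxj, starLE_refl j⟩⟩)
    rw [card_insert_of_notMem (by simp [Ne.symm hia, Ne.symm hja]), card_pair hij] at this
    omega
  have hi := hS i hxi
  have hj := hS j hxj
  simp only [Set.mem_insert_iff, Set.mem_singleton_iff] at hi hj
  refine ⟨σ b + σ c, ?_⟩
  rw [evenLeader_mid_add_right]
  rcases hi with rfl | rfl | rfl | rfl <;> rcases hj with rfl | rfl | rfl | rfl <;>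
    simp_all [x, add_comm]

theorem eq_single_or_evenLeader_of_wtP_le_two (hbc : b ≠ c) {x : ι → ZMod 2}
    (hx : wt x ≤ 2) :
    (∃ t, x = Pi.single t 1) ∨ ∃ u, x = evenLeader σ a b c u := by
  set s := univ.filter (x · ≠ 0)
  have hxs : x = ∑ i ∈ s, Pi.single i 1 := (sum_single_support x).symm
  have hs : #s ≤ 2 := by
    have := (sum_le_wtP (T := s) fun i hi => ⟨i, (mem_filter.1 hi).2, starLE_refl i⟩).trans hx
    rw [sum_posetWeight] at this
    omega
  obtain h | h | h : #s = 0 ∨ #s = 1 ∨ #s = 2 := by omega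
  · rw [hxs, card_eq_zero.1 h, sum_empty]
    exact Or.inr ⟨0, (evenLeader_zero hbc).symm⟩
  · obtain ⟨t, ht⟩ := card_eq_one.1 h
    rw [hxs, ht, sum_singleton]
    exact Or.inl ⟨t, rfl⟩
  · obtain ⟨i, j, hij, hij'⟩ := card_eq_two.1 h
    rw [hxs, hij', sum_pair hij] at hx ⊢
    exact Or.inr (exists_evenLeader_eq_of_wtP_pair_le_two hij hx)

theorem surjOn_parityCheck (hab : a ≠ b) (hac : a ≠ c) (hbc : b ≠ c) :
    Set.SurjOn (parityCheck σ) {v | wt v ≤ 2} Set.univ := by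
  rintro ⟨p, u⟩ -
  fin_cases p
  · exact ⟨_, wtP_evenLeader_le_two hab hac hbc u, parityCheck_evenLeader u⟩
  · refine ⟨_, wtP_single_le_two hbc (σ.symm u), ?_⟩
    rw [parityCheck_single, σ.apply_symm_apply]
    rfl

theorem injOn_parityCheck (hbc : b ≠ c) :
    Set.InjOn (parityCheck σ) {v | wt v ≤ 2} := by
  intro v hv v' hv' h
  rcases eq_single_or_evenLeader_of_wtP_le_two hbc hv with ⟨t, rfl⟩ | ⟨u, rfl⟩ <;>
  rcases eq_single_or_evenLeader_of_wtP_le_two hbc hv' with ⟨t', rfl⟩ | ⟨u', rfl⟩ <;>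
  simp_all [parityCheck_single, parityCheck_evenLeader]

theorem isCovering_ker_parityCheck (hab : a ≠ b) (hac : a ≠ c) (hbc : b ≠ c) :
    IsCovering (dP (posetLE σ a b c) (posetWeight σ a b c)) ((parityCheck σ).ker : Set _) 2 :=
  isCovering_ker _ _ _ ((surjOn_parityCheck hab hac hbc).mono subset_rfl (Set.subset_univ _))

theorem isPacking_ker_parityCheck (hbc : b ≠ c) :
    IsPacking (dP (posetLE σ a b c) (posetWeight σ a b c)) ((parityCheck σ).ker : Set _) 2 :=
  isPacking_ker _ _ _ (injOn_parityCheck hbc)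

end Construction

end

def binaryEquiv (k : ℕ) : Fin (2 ^ k) ≃ (Fin k → ZMod 2) :=
  finFunctionFinEquiv.symm

theorem binaryEquiv_apply {k : ℕ} (i : Fin (2 ^ k)) (j : Fin k) :
    binaryEquiv k i j = if i.val.testBit j then 1 else 0 := by
  apply ZMod.val_injective
  change ((finFunctionFinEquiv.symm i j : Fin 2) : ℕ) = _
  rw [finFunctionFinEquiv_symm_apply_val, Nat.testBit_eq_decide_div_mod_eq]
  split_ifs with hb <;> simp [ZMod.val_one] at hb ⊢ <;> omega

theorem extHamming_eq_ker (k : ℕ) :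
    extHamming k = ((parityCheck (binaryEquiv k)).ker : Set (Fin (2 ^ k) → ZMod 2)) := by
  ext x
  simp only [extHamming, Set.mem_ofPred_eq, SetLike.mem_coe, AddMonoidHom.mem_ker,
    parityCheck_apply, Prod.mk_eq_zero, funext_iff, Finset.sum_apply, Pi.smul_apply,
    binaryEquiv_apply, smul_eq_mul, mul_ite, mul_one, mul_zero, ← Finset.sum_filter,
    Fin.forall_iff, Pi.zero_apply]

theorem stmt_16 (k : ℕ) (hk : 3 ≤ k) :
    ∃ (le : Fin (2 ^ k) → Fin (2 ^ k) → Prop) (π : Fin (2 ^ k) → ℕ),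
      (∀ i, le i i) ∧ (∀ i j, le i j → le j i → i = j) ∧
      (∀ i j l, le i j → le j l → le i l) ∧
      (∀ i, 0 < π i) ∧ (∃ a, π a = 2) ∧
      IsCovering (dP le π) (extHamming k) 2 ∧
      IsPacking (dP le π) (extHamming k) 2 := by
  have h2k : 2 < 2 ^ k :=
    calc 2 < 2 ^ 3 := by norm_num
      _ ≤ 2 ^ k := Nat.pow_le_pow_right two_pos hk
  let a : Fin (2 ^ k) := ⟨0, by omega⟩
  let b : Fin (2 ^ k) := ⟨1, by omega⟩
  let c : Fin (2 ^ k) := ⟨2, h2k⟩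
  have hab : a ≠ b := by simp [a, b, Fin.ext_iff]
  have hac : a ≠ c := by simp [a, c, Fin.ext_iff]
  have hbc : b ≠ c := by simp [b, c, Fin.ext_iff]
  refine ⟨posetLE (binaryEquiv k) a b c, posetWeight (binaryEquiv k) a b c, starLE_refl,
    fun _ _ => starLE_antisymm, fun _ _ _ => starLE_trans,
    fun i => by unfold posetWeight; split_ifs <;> omega, ⟨_, if_pos rfl⟩, ?_⟩
  rw [extHamming_eq_ker]
  exact ⟨isCovering_ker_parityCheck hab hac hbc, isPacking_ker_parityCheck hbc⟩
end

section
/- For every integer k ≥ 3, there exists a digraph G on 2^k vertices that contains a directed cycle (so that the G-metric is not a poset metric) such that the extended binary Hamming code H̃_k is a 2-perfect G-code. -/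
/-!
`H̃_k` is the kernel of the syndrome map `x ↦ ∑ xᵢ • (1, bin i)`, and `d_G` is translation
invariant, so `H̃_k` is 2-perfect as soon as the syndrome map is a bijection from the radius-2
ball around `0` onto `𝔽₂ × 𝔽₂ᵏ`. In the digraph used here every vertex has at most one out-arc
and two consecutive arcs return to the start, so the ball consists of `0`, the unit vectors `eᵢ`
(syndrome `(1, bin i)`) and the `eᵢ + eⱼ` with no arc leaving `{i, j}` (syndrome
`(0, bin (i xor j))`). The sinks `0, 1, 2`, the 2-cycle `3 ⇄ 7`, the arcs `4 → 1`, `5 → 2`,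
`6 → 0` and `a → 0` for `a ≥ 8` are chosen so that these closed pairs, `{0,1}, {0,2}, {1,2},
{3,7}, {1,4}, {2,5}, {0,6}` and `{0,a}`, realise every nonzero xor below `2ᵏ` exactly once.
-/

open Classical

open Finset

section SyndromeDecoding

variable {A S F : Type*} [AddGroup A] [AddGroup S] [FunLike F A S] [AddMonoidHomClass F A S]
  (w : A → ℕ) (s : F) (r : ℕ)

theorem isPacking_preimage_zero_of_injOn (h : Set.InjOn s {y | w y ≤ r}) :
    IsPacking (fun a b => w (a - b)) (s ⁻¹' {0}) r := by
  rintro c₁ hc₁ c₂ hc₂ hne x ⟨h₁, h₂⟩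
  refine hne (sub_left_injective (h h₁ h₂ ?_))
  simp_all [map_sub]

theorem isCovering_preimage_zero_of_range_subset (h : Set.range s ⊆ s '' {y | w y ≤ r}) :
    IsCovering (fun a b => w (a - b)) (s ⁻¹' {0}) r := by
  intro x
  obtain ⟨y, hy, hsy⟩ := h ⟨-x, rfl⟩
  refine ⟨y + x, ?_, ?_⟩
  · simp [map_add, hsy]
  · simpa using hy

end SyndromeDecoding

def IsOutClosed {V : Type*} (E : V → V → Prop) (S : Finset V) : Prop :=
  ∀ u ∈ S, ∀ v, E u v → v ∈ S

theorem IsOutClosed.mem_of_reflTransGen {V : Type*} {E : V → V → Prop} {S : Finset V}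
    (hS : IsOutClosed E S) {u v : V} (hu : u ∈ S) (h : Relation.ReflTransGen E u v) : v ∈ S := by
  induction h with
  | refl => exact hu
  | tail _ hE ih => exact hS _ ih _ hE

section GWeight

variable {V : Type*} [Fintype V] {E : V → V → Prop} {S : Finset V}

theorem wtG_le_card_of_isOutClosed (hS : IsOutClosed E S) {y : V → ZMod 2}
    (hy : ∀ v, y v ≠ 0 → v ∈ S) : wtG E y ≤ #S := by
  refine card_le_card fun v hv => ?_
  obtain ⟨u, hu, huv⟩ := (mem_filter.mp hv).2
  exact hS.mem_of_reflTransGen (hy u hu) huv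

theorem eq_sum_single_of_zmod_two [DecidableEq V] (y : V → ZMod 2) :
    y = ∑ i ∈ univ.filter (y · ≠ 0), Pi.single i 1 := by
  funext v
  rw [Finset.sum_apply, Finset.sum_pi_single]
  simp only [mem_filter, mem_univ, true_and]
  generalize y v = a
  revert a
  decide

theorem eq_zero_or_single_or_pair_of_wtG_le_two [DecidableEq V] {y : V → ZMod 2}
    (h : wtG E y ≤ 2) :
    y = 0 ∨ (∃ i, y = Pi.single i 1) ∨
      ∃ i j, i ≠ j ∧ IsOutClosed E {i, j} ∧ y = Pi.single i 1 + Pi.single j 1 := by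
  set T := univ.filter (y · ≠ 0)
  set C := univ.filter (fun v => ∃ u, y u ≠ 0 ∧ Relation.ReflTransGen E u v)
  have hTC : T ⊆ C := fun v hv =>
    mem_filter.mpr ⟨mem_univ v, v, (mem_filter.mp hv).2, .refl⟩
  have hC : #C ≤ 2 := h
  have hy : y = ∑ i ∈ T, Pi.single i 1 := eq_sum_single_of_zmod_two y
  obtain hT | hT | hT : #T = 0 ∨ #T = 1 ∨ #T = 2 := by
    have := card_le_card hTC
    omega
  · rw [card_eq_zero.mp hT, sum_empty] at hy
    exact Or.inl hy
  · obtain ⟨i, hi⟩ := card_eq_one.mp hT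
    rw [hi, sum_singleton] at hy
    exact Or.inr (Or.inl ⟨i, hy⟩)
  · obtain ⟨i, j, hij, hT⟩ := card_eq_two.mp hT
    rw [hT, sum_pair hij] at hy
    have hCT : C = T := (eq_of_subset_of_card_le hTC (by omega)).symm
    refine Or.inr (Or.inr ⟨i, j, hij, ?_, hy⟩)
    rw [← hT]
    intro u hu v huv
    rw [← hCT]
    exact mem_filter.mpr ⟨mem_univ v, u, (mem_filter.mp hu).2, .single huv⟩

theorem wtG_single_add_single_le_two [DecidableEq V] {i j : V} (h : IsOutClosed E {i, j}) :
    wtG E (Pi.single i 1 + Pi.single j 1) ≤ 2 := by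
  refine (wtG_le_card_of_isOutClosed h fun v hv => ?_).trans card_le_two
  by_contra hv'
  simp only [mem_insert, mem_singleton, not_or] at hv'
  simp [Pi.single_eq_of_ne hv'.1, Pi.single_eq_of_ne hv'.2] at hv

end GWeight

def binaryDigits (k a : ℕ) : Fin k → ZMod 2 := fun j => if a.testBit j then 1 else 0

theorem binaryDigits_xor (k a b : ℕ) :
    binaryDigits k (a ^^^ b) = binaryDigits k a + binaryDigits k b := by
  funext j
  simp only [binaryDigits, Pi.add_apply, Nat.testBit_xor]
  cases a.testBit j <;> cases b.testBit j <;> decide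

theorem binaryDigits_zero (k : ℕ) : binaryDigits k 0 = 0 := by
  funext j
  simp [binaryDigits]

theorem eq_of_binaryDigits_eq {k a b : ℕ} (ha : a < 2 ^ k) (hb : b < 2 ^ k)
    (h : binaryDigits k a = binaryDigits k b) : a = b := by
  refine Nat.eq_of_testBit_eq fun j => ?_
  rcases Nat.lt_or_ge j k with hj | hj
  · have := congrFun h ⟨j, hj⟩
    revert this
    simp only [binaryDigits]
    cases a.testBit j <;> cases b.testBit j <;> decide
  · have hk := Nat.pow_le_pow_right two_pos hj
    rw [Nat.testBit_lt_two_pow (ha.trans_le hk), Nat.testBit_lt_two_pow (hb.trans_le hk)]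

theorem binaryDigits_bijective (k : ℕ) :
    Function.Bijective fun i : Fin (2 ^ k) => binaryDigits k i := by
  refine (Fintype.bijective_iff_injective_and_card _).mpr ⟨fun i j h => ?_, by simp⟩
  exact Fin.ext (eq_of_binaryDigits_eq i.isLt j.isLt h)

/-- `H_k x`, with the all-ones row of `H_k` as the first component. -/
noncomputable def hammingSyndrome (k : ℕ) :
    (Fin (2 ^ k) → ZMod 2) →ₗ[ZMod 2] ZMod 2 × (Fin k → ZMod 2) :=
  Fintype.linearCombination (ZMod 2) fun i => (1, binaryDigits k i)

theorem hammingSyndrome_single (k : ℕ) (i : Fin (2 ^ k)) :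
    hammingSyndrome k (Pi.single i 1) = (1, binaryDigits k i) := by
  simp [hammingSyndrome, Fintype.linearCombination_apply_single]

theorem hammingSyndrome_single_add_single (k : ℕ) (i j : Fin (2 ^ k)) :
    hammingSyndrome k (Pi.single i 1 + Pi.single j 1) = (0, binaryDigits k (i ^^^ j)) := by
  rw [map_add, hammingSyndrome_single, hammingSyndrome_single, binaryDigits_xor, Prod.mk_add_mk]
  rfl

theorem extHamming_eq_preimage_hammingSyndrome (k : ℕ) :
    extHamming k = hammingSyndrome k ⁻¹' {0} := by
  ext x
  simp only [extHamming, hammingSyndrome, Fintype.linearCombination_apply, Set.mem_ofPred_eq,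
    Set.mem_preimage, Set.mem_singleton_iff, Prod.ext_iff, Prod.fst_sum, Prod.snd_sum,
    Prod.smul_mk, smul_eq_mul, mul_one, Prod.fst_zero, Prod.snd_zero, funext_iff,
    Finset.sum_apply, Pi.smul_apply, binaryDigits, mul_ite, mul_zero, Finset.sum_ite,
    sum_const_zero, add_zero, Pi.zero_apply, Fin.forall_iff]

theorem eight_le_two_pow {k : ℕ} (hk : 3 ≤ k) : 8 ≤ 2 ^ k :=
  Nat.pow_le_pow_right (n := 2) (by norm_num) hk

def hammingNext : ℕ → Option ℕ
  | 0 | 1 | 2 => none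
  | 3 => some 7
  | 4 => some 1
  | 5 => some 2
  | 6 => some 0
  | 7 => some 3
  | _ + 8 => some 0

theorem hammingNext_lt_eight {a b : ℕ} (h : hammingNext a = some b) : b < 8 := by
  rcases a with _ | _ | _ | _ | _ | _ | _ | _ | a <;> simp [hammingNext] at h <;> omega

theorem hammingNext_ne_self (a : ℕ) : hammingNext a ≠ some a := by
  rcases a with _ | _ | _ | _ | _ | _ | _ | _ | a <;> simp [hammingNext]

theorem hammingNext_hammingNext {a b c : ℕ} (hab : hammingNext a = some b)
    (hbc : hammingNext b = some c) : c = a := by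
  rcases a with _ | _ | _ | _ | _ | _ | _ | _ | a <;> simp [hammingNext] at hab <;> subst hab <;>
    simp [hammingNext] at hbc <;> omega

def hammingDigraph (k : ℕ) (u v : Fin (2 ^ k)) : Prop :=
  hammingNext u = some v

def IsClosedPair (a b : ℕ) : Prop :=
  (∀ c ∈ hammingNext a, c = b) ∧ ∀ c ∈ hammingNext b, c = a

instance : DecidableRel IsClosedPair := fun _ _ => inferInstanceAs (Decidable (_ ∧ _))

theorem IsClosedPair.symm {a b : ℕ} (h : IsClosedPair a b) : IsClosedPair b a := And.symm h

theorem IsClosedPair.eq_zero_of_eight_le {a b : ℕ} (h : IsClosedPair a b) (ha : 8 ≤ a) : b = 0 := by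
  obtain ⟨a, rfl⟩ := Nat.exists_eq_add_of_le' ha
  exact (h.1 0 rfl).symm

theorem IsClosedPair.lt_eight_of_xor_lt_eight {a b : ℕ} (h : IsClosedPair a b) (hab : a ^^^ b < 8) :
    a < 8 ∧ b < 8 := by
  by_contra! hge
  rcases Nat.lt_or_ge a 8 with ha | ha
  · rw [h.symm.eq_zero_of_eight_le (hge ha), Nat.zero_xor] at hab
    omega
  · rw [h.eq_zero_of_eight_le ha, Nat.xor_zero] at hab
    omega

theorem IsClosedPair.eq_of_eight_le_xor {a b : ℕ} (h : IsClosedPair a b) (hab : 8 ≤ a ^^^ b) :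
    (a = 0 ∧ b = a ^^^ b) ∨ (b = 0 ∧ a = a ^^^ b) := by
  rcases Nat.lt_or_ge a 8 with ha | ha
  · have hb : 8 ≤ b := by
      by_contra! hb
      exact absurd (Nat.xor_lt_two_pow (n := 3) ha hb) (by omega)
    obtain rfl := h.symm.eq_zero_of_eight_le hb
    simp
  · obtain rfl := h.eq_zero_of_eight_le ha
    simp

theorem isClosedPair_fin_eight_xor_unique :
    ∀ a b a' b' : Fin 8, a.val ≠ b.val → a'.val ≠ b'.val → IsClosedPair a b →
      IsClosedPair a' b' → a.val ^^^ b.val = a'.val ^^^ b'.val →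
      (a = a' ∧ b = b') ∨ (a = b' ∧ b = a') := by
  decide

theorem exists_isClosedPair_fin_eight_xor_eq :
    ∀ m : Fin 8, m ≠ 0 → ∃ a b : Fin 8, IsClosedPair a b ∧ a.val ^^^ b.val = m := by
  decide

theorem IsClosedPair.eq_or_eq_of_xor_eq {a b a' b' : ℕ} (h : IsClosedPair a b)
    (h' : IsClosedPair a' b') (hab : a ≠ b) (hab' : a' ≠ b') (hx : a ^^^ b = a' ^^^ b') :
    (a = a' ∧ b = b') ∨ (a = b' ∧ b = a') := by
  rcases Nat.lt_or_ge (a ^^^ b) 8 with hm | hm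
  · obtain ⟨ha, hb⟩ := h.lt_eight_of_xor_lt_eight hm
    obtain ⟨ha', hb'⟩ := h'.lt_eight_of_xor_lt_eight (hx ▸ hm)
    simpa [Fin.ext_iff] using
      isClosedPair_fin_eight_xor_unique ⟨a, ha⟩ ⟨b, hb⟩ ⟨a', ha'⟩ ⟨b', hb'⟩ hab hab' h h' hx
  · rcases h.eq_of_eight_le_xor hm with ⟨ha, hb⟩ | ⟨hb, ha⟩ <;>
      rcases h'.eq_of_eight_le_xor (hx ▸ hm) with ⟨ha', hb'⟩ | ⟨hb', ha'⟩ <;> omega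

theorem exists_isClosedPair_xor_eq {k m : ℕ} (hk : 3 ≤ k) (hm : m < 2 ^ k) (h0 : m ≠ 0) :
    ∃ a < 2 ^ k, ∃ b < 2 ^ k, IsClosedPair a b ∧ a ^^^ b = m := by
  have h8 := eight_le_two_pow hk
  rcases Nat.lt_or_ge m 8 with hm8 | hm8
  · obtain ⟨a, b, hab, hx⟩ :=
      exists_isClosedPair_fin_eight_xor_eq ⟨m, hm8⟩ (by simpa [Fin.ext_iff] using h0)
    exact ⟨a, by omega, b, by omega, hab, hx⟩
  · obtain ⟨n, rfl⟩ := Nat.exists_eq_add_of_le' hm8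
    refine ⟨0, by omega, n + 8, hm, ⟨by simp [hammingNext], fun c hc => ?_⟩, Nat.zero_xor _⟩
    exact (Option.some_inj.mp hc).symm

theorem isOutClosed_pair_of_isClosedPair {k : ℕ} {i j : Fin (2 ^ k)} (h : IsClosedPair i j) :
    IsOutClosed (hammingDigraph k) {i, j} := by
  intro u hu v huv
  simp only [mem_insert, mem_singleton] at hu ⊢
  rcases hu with rfl | rfl
  · exact Or.inr (Fin.ext (h.1 v huv))
  · exact Or.inl (Fin.ext (h.2 v huv))

theorem isClosedPair_of_isOutClosed_pair {k : ℕ} (hk : 3 ≤ k) {i j : Fin (2 ^ k)}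
    (h : IsOutClosed (hammingDigraph k) {i, j}) : IsClosedPair i j := by
  have key : ∀ {i j : Fin (2 ^ k)}, IsOutClosed (hammingDigraph k) {i, j} →
      ∀ c ∈ hammingNext i, c = j := by
    intro i j h c hc
    have hc8 : c < 2 ^ k := (hammingNext_lt_eight hc).trans_le (eight_le_two_pow hk)
    rcases mem_insert.mp (h i (mem_insert_self _ _) ⟨c, hc8⟩ hc) with hci | hcj
    · exact absurd (congrArg Fin.val hci ▸ hc) (hammingNext_ne_self _)
    · exact congrArg Fin.val (mem_singleton.mp hcj)
  exact ⟨key h, key (pair_comm i j ▸ h)⟩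

theorem wtG_hammingDigraph_single_le_two (k : ℕ) (i : Fin (2 ^ k)) :
    wtG (hammingDigraph k) (Pi.single i 1) ≤ 2 := by
  have hS : IsOutClosed (hammingDigraph k) (insert i (univ.filter (hammingDigraph k i))) := by
    intro u hu v huv
    rcases mem_insert.mp hu with rfl | hu
    · exact mem_insert_of_mem (mem_filter.mpr ⟨mem_univ _, huv⟩)
    · rw [Fin.ext (hammingNext_hammingNext (mem_filter.mp hu).2 huv)]
      exact mem_insert_self _ _
  have hsucc : #(univ.filter (hammingDigraph k i)) ≤ 1 := card_le_one.mpr fun a ha b hb =>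
    Fin.ext (Option.some_inj.mp (((mem_filter.mp ha).2).symm.trans (mem_filter.mp hb).2))
  calc wtG (hammingDigraph k) (Pi.single i 1)
      ≤ #(insert i (univ.filter (hammingDigraph k i))) :=
        wtG_le_card_of_isOutClosed hS fun v hv => by
          by_contra hvi
          exact hv (Pi.single_eq_of_ne (by rintro rfl; exact hvi (mem_insert_self _ _)) _)
    _ ≤ 2 := (card_insert_le _ _).trans (by omega)

theorem binaryDigits_xor_ne_zero {k : ℕ} {i j : Fin (2 ^ k)} (hij : i ≠ j) :
    binaryDigits k (i ^^^ j) ≠ 0 := by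
  rw [← binaryDigits_zero k]
  intro h
  exact hij (Fin.ext (Nat.eq_of_xor_eq_zero
    (eq_of_binaryDigits_eq (Nat.xor_lt_two_pow i.isLt j.isLt) (Nat.two_pow_pos k) h)))

theorem single_add_single_eq_of_binaryDigits_xor_eq {k : ℕ} (hk : 3 ≤ k) {i j i' j' : Fin (2 ^ k)}
    (hij : i ≠ j) (hij' : i' ≠ j') (hc : IsOutClosed (hammingDigraph k) {i, j})
    (hc' : IsOutClosed (hammingDigraph k) {i', j'})
    (h : binaryDigits k (i ^^^ j) = binaryDigits k (i' ^^^ j')) :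
    (Pi.single i 1 + Pi.single j 1 : Fin (2 ^ k) → ZMod 2) = Pi.single i' 1 + Pi.single j' 1 := by
  have hx := eq_of_binaryDigits_eq (Nat.xor_lt_two_pow i.isLt j.isLt)
    (Nat.xor_lt_two_pow i'.isLt j'.isLt) h
  rcases (isClosedPair_of_isOutClosed_pair hk hc).eq_or_eq_of_xor_eq
    (isClosedPair_of_isOutClosed_pair hk hc') (Fin.val_ne_of_ne hij) (Fin.val_ne_of_ne hij') hx
    with ⟨hi, hj⟩ | ⟨hi, hj⟩
  · rw [Fin.ext hi, Fin.ext hj]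
  · rw [Fin.ext hi, Fin.ext hj, add_comm]

theorem injOn_hammingSyndrome {k : ℕ} (hk : 3 ≤ k) :
    Set.InjOn (hammingSyndrome k) {y | wtG (hammingDigraph k) y ≤ 2} := by
  intro y₁ h₁ y₂ h₂ heq
  rcases eq_zero_or_single_or_pair_of_wtG_le_two h₁ with rfl | ⟨i, rfl⟩ | ⟨i, j, hij, hc, rfl⟩ <;>
    rcases eq_zero_or_single_or_pair_of_wtG_le_two h₂ with
      rfl | ⟨i', rfl⟩ | ⟨i', j', hij', hc', rfl⟩ <;>
    simp only [map_zero, hammingSyndrome_single, hammingSyndrome_single_add_single, Prod.mk.injEq,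
      Prod.zero_eq_mk] at heq
  · rfl
  · exact absurd heq.1 zero_ne_one
  · exact absurd heq.2.symm (binaryDigits_xor_ne_zero hij')
  · exact absurd heq.1 one_ne_zero
  · rw [Fin.ext (eq_of_binaryDigits_eq i.isLt i'.isLt heq.2)]
  · exact absurd heq.1 one_ne_zero
  · exact absurd heq.2 (binaryDigits_xor_ne_zero hij)
  · exact absurd heq.1 zero_ne_one
  · exact single_add_single_eq_of_binaryDigits_xor_eq hk hij hij' hc hc' heq.2

theorem range_hammingSyndrome_subset {k : ℕ} (hk : 3 ≤ k) :
    Set.range (hammingSyndrome k) ⊆ hammingSyndrome k '' {y | wtG (hammingDigraph k) y ≤ 2} := by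
  rintro ⟨p, t⟩ -
  obtain ⟨m, rfl⟩ := (binaryDigits_bijective k).2 t
  obtain rfl | rfl : p = 0 ∨ p = 1 := by revert p; decide
  · by_cases hm : (m : ℕ) = 0
    · exact ⟨0, by simp [wtG], by simp [hm, binaryDigits_zero, Prod.zero_eq_mk]⟩
    · obtain ⟨a, ha, b, hb, hab, hx⟩ := exists_isClosedPair_xor_eq hk m.isLt hm
      refine ⟨Pi.single ⟨a, ha⟩ 1 + Pi.single ⟨b, hb⟩ 1, ?_, ?_⟩
      · exact wtG_single_add_single_le_two
          (isOutClosed_pair_of_isClosedPair (i := ⟨a, ha⟩) (j := ⟨b, hb⟩) hab)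
      · rw [hammingSyndrome_single_add_single]
        exact congrArg _ (congrArg _ hx)
  · exact ⟨Pi.single m 1, wtG_hammingDigraph_single_le_two k m, hammingSyndrome_single k m⟩

theorem stmt_17 (k : ℕ) (hk : 3 ≤ k) :
    ∃ E : Fin (2 ^ k) → Fin (2 ^ k) → Prop,
      (∀ v, ¬ E v v) ∧ (∃ v, Relation.TransGen E v v) ∧
      IsCovering (dG E) (extHamming k) 2 ∧
      IsPacking (dG E) (extHamming k) 2 := by
  have h8 := eight_le_two_pow hk
  refine ⟨hammingDigraph k, fun v => hammingNext_ne_self v, ⟨⟨3, by omega⟩,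
    .head (show hammingDigraph k _ ⟨7, by omega⟩ from rfl) (.single rfl)⟩, ?_, ?_⟩ <;>
    rw [extHamming_eq_preimage_hammingSyndrome]
  · exact isCovering_preimage_zero_of_range_subset _ _ _ (range_hammingSyndrome_subset hk)
  · exact isPacking_preimage_zero_of_injOn _ _ _ (injOn_hammingSyndrome hk)
end

section
/- Let k ≥ 2, let G be a digraph on {1,…,2^k}, and let P_π̃ be the weighted poset induced by G. If the extended binary Hamming code H̃_k is a 2-perfect G-code, then Ω₁²(1) = 1 + (1/2)·Ω₁¹(1)·(Ω₁¹(1) − 3), i.e., 2·Ω₁²(1) = 2 + Ω₁¹(1)·(Ω₁¹(1) − 3), where Ω_j^ω(i) denotes the number of order ideals of P_π̃ of cardinality i, total weight ω, and exactly j maximal elements (so Ω₁¹(1) is the number of minimal elements of P_π̃ of weight 1 and Ω₁²(1) is the number of minimal elements of weight 2). -/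
/-
A codeword within `G`-distance 2 of a unit vector `e_v` is within Hamming distance 2 of it, hence is
`0` (the code has even weights and minimum distance 4); so every vertex reaches at most one other
vertex. Call an ordered pair `(x, y)`, `x ≠ y`, closed if nothing outside `{x, y}` is reachable from
it, i.e. `e_x + e_y` has `G`-weight 2. The codewords of weight 4 of the extended Hamming code are
the `e_p + e_q + e_r + e_s` with `p ^^^ q ^^^ r ^^^ s = 0`, so covering and packing leave exactly
one closed pair, up to order, for each nonzero value of `x ^^^ y`: there are `2 (2^k - 1)` of them.
Counting them instead through the `a` sinks and the `m` closed pairs of non-sinks gives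
`a (a - 1) + 2 (2^k - a) - m`. The minimal classes of weight 1 of the induced poset are the sinks,
and those of weight 2 are the `m / 2` two-cycles from which nothing else is reachable, so
`m = a^2 - 3a + 2`.
-/

open Classical

namespace GCode

open Finset Relation

section Reach

variable {V : Type*} [Fintype V] (E : V → V → Prop)

noncomputable def reach (v : V) : Finset V := {w | ReflTransGen E v w}

variable {E}

theorem mem_reach {v w : V} : w ∈ reach E v ↔ ReflTransGen E v w := by simp [reach]

theorem self_mem_reach (v : V) : v ∈ reach E v := mem_reach.2 .refl

theorem reach_subset_reach {v w : V} (h : w ∈ reach E v) : reach E w ⊆ reach E v :=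
  fun _ hu => mem_reach.2 ((mem_reach.1 h).trans (mem_reach.1 hu))

theorem sim_iff_mem_reach {v w : V} : sim E w v ↔ w ∈ reach E v ∧ v ∈ reach E w := by
  simp only [mem_reach]
  constructor
  · rintro (rfl | ⟨hwv, hvw⟩)
    · exact ⟨.refl, .refl⟩
    · exact ⟨hvw.to_reflTransGen, hwv.to_reflTransGen⟩
  · rintro ⟨hvw, hwv⟩
    rcases reflTransGen_iff_eq_or_transGen.1 hvw with rfl | hvw
    · exact Or.inl rfl
    · rcases reflTransGen_iff_eq_or_transGen.1 hwv with rfl | hwv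
      · exact Or.inl rfl
      · exact Or.inr ⟨hwv, hvw⟩

theorem mk_eq_mk_iff {v w : V} :
    Quotient.mk (simSetoid E) w = Quotient.mk (simSetoid E) v ↔
      w ∈ reach E v ∧ v ∈ reach E w :=
  Quotient.eq.trans sim_iff_mem_reach

theorem wtG_neg (x : V → ZMod 2) : wtG E (-x) = wtG E x := by
  simp [wtG]

variable [DecidableEq V]

theorem wtG_eq_card_biUnion_reach (x : V → ZMod 2) :
    wtG E x = #(({v | x v ≠ 0} : Finset V).biUnion (reach E)) := by
  simp only [wtG]
  congr 1
  ext w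
  simp [mem_reach]

theorem hammingNorm_le_wtG (x : V → ZMod 2) : hammingNorm x ≤ wtG E x := by
  rw [wtG_eq_card_biUnion_reach]
  exact card_le_card fun v hv => mem_biUnion.2 ⟨v, hv, self_mem_reach v⟩

end Reach

section Vectors

variable {V : Type*} [Fintype V]

theorem sum_eq_hammingNorm (y : V → ZMod 2) : ∑ i, y i = hammingNorm y := by
  have : ∀ a : ZMod 2, a ≠ 0 → a = 1 := by decide
  rw [← sum_filter_ne_zero, sum_congr rfl fun i hi => this _ (mem_filter.1 hi).2]
  simp [hammingNorm]

theorem hammingNorm_mod_two {y : V → ZMod 2} {c : ℕ} (h : ∑ i, y i = c) :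
    hammingNorm y % 2 = c % 2 := by
  rwa [sum_eq_hammingNorm, ZMod.natCast_eq_natCast_iff'] at h

variable [DecidableEq V]

theorem support_single {M : Type*} [Zero M] [DecidableEq M] {a : M} (ha : a ≠ 0) (v : V) :
    ({i | (Pi.single v a : V → M) i ≠ 0} : Finset V) = {v} := by
  ext i
  by_cases h : i = v <;> simp [Pi.single_apply, h, ha]

theorem support_single_add_single {M : Type*} [AddZeroClass M] [DecidableEq M] {a b : M}
    (ha : a ≠ 0) (hb : b ≠ 0) {x y : V} (hxy : x ≠ y) :
    ({i | (Pi.single x a + Pi.single y b : V → M) i ≠ 0} : Finset V) = {x, y} := by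
  ext i
  by_cases hx : i = x
  · subst hx; simp [Pi.single_apply, hxy, ha]
  · by_cases hy : i = y
    · subst hy; simp [Pi.single_apply, hx, hb]
    · simp [Pi.single_apply, hx, hy]

theorem sum_single_support (y : V → ZMod 2) :
    ∑ v ∈ ({v | y v ≠ 0} : Finset V), Pi.single v 1 = y := by
  funext i
  have : ∀ a : ZMod 2, a ≠ 0 → a = 1 := by decide
  by_cases hi : y i = 0 <;> simp [Finset.sum_apply, Pi.single_apply, hi, this]

theorem exists_eq_single_of_hammingNorm_eq_one {y : V → ZMod 2} (h : hammingNorm y = 1) :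
    ∃ u, y = Pi.single u 1 := by
  obtain ⟨u, hu⟩ := card_eq_one.1 h
  exact ⟨u, by rw [← sum_single_support y, hu, sum_singleton]⟩

theorem exists_eq_single_add_single_of_hammingNorm_eq_two {y : V → ZMod 2}
    (h : hammingNorm y = 2) : ∃ r s, r ≠ s ∧ y = Pi.single r 1 + Pi.single s 1 := by
  obtain ⟨r, s, hrs, hy⟩ := card_eq_two.1 h
  exact ⟨r, s, hrs, by rw [← sum_single_support y, hy, sum_pair hrs]⟩

variable (E : V → V → Prop)

theorem wtG_single (v : V) : wtG E (Pi.single v 1) = #(reach E v) := by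
  rw [wtG_eq_card_biUnion_reach, support_single one_ne_zero, singleton_biUnion]

theorem wtG_single_add_single {x y : V} (hxy : x ≠ y) :
    wtG E (Pi.single x 1 + Pi.single y 1) = #(reach E x ∪ reach E y) := by
  rw [wtG_eq_card_biUnion_reach, support_single_add_single one_ne_zero one_ne_zero hxy,
    biUnion_insert, singleton_biUnion]

theorem wtG_single_add_single_le_two_iff {x y : V} (hxy : x ≠ y) :
    wtG E (Pi.single x 1 + Pi.single y 1) ≤ 2 ↔ reach E x ∪ reach E y ⊆ {x, y} := by
  have hsub : {x, y} ⊆ reach E x ∪ reach E y :=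
    insert_subset (mem_union_left _ (self_mem_reach x))
      (singleton_subset_iff.2 (mem_union_right _ (self_mem_reach y)))
  rw [wtG_single_add_single E hxy, ← card_pair hxy]
  exact ⟨fun h => (eq_of_subset_of_card_le hsub h).ge, fun h => card_le_card h⟩

end Vectors

section ClosedPairs

variable {V : Type*} [Fintype V] [DecidableEq V] (E : V → V → Prop)

noncomputable def closedPairs : Finset (V × V) :=
  {p | p.1 ≠ p.2 ∧ reach E p.1 ∪ reach E p.2 ⊆ {p.1, p.2}}

noncomputable def sinks : Finset V := {v | reach E v = {v}}

variable {E}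

theorem mem_closedPairs {x y : V} :
    (x, y) ∈ closedPairs E ↔ x ≠ y ∧ reach E x ∪ reach E y ⊆ {x, y} := by
  simp [closedPairs]

theorem mem_closedPairs_iff_wtG {x y : V} :
    (x, y) ∈ closedPairs E ↔ x ≠ y ∧ wtG E (Pi.single x 1 + Pi.single y 1) ≤ 2 := by
  rw [mem_closedPairs]
  exact and_congr_right fun hxy => (wtG_single_add_single_le_two_iff E hxy).symm

theorem swap_mem_closedPairs {p : V × V} (h : p ∈ closedPairs E) : p.swap ∈ closedPairs E := by
  obtain ⟨x, y⟩ := p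
  rw [mem_closedPairs] at h ⊢
  exact ⟨h.1.symm, by rw [union_comm, pair_comm]; exact h.2⟩

theorem mem_sinks {v : V} : v ∈ sinks E ↔ reach E v = {v} := by
  simp [sinks]

theorem exists_reach_eq_pair (hreach : ∀ v, #(reach E v) ≤ 2) {v : V} (hv : v ∉ sinks E) :
    ∃ w, w ≠ v ∧ reach E v = {v, w} := by
  have hmem := self_mem_reach (E := E) v
  have hcard : #((reach E v).erase v) = 1 := by
    have hgt : 2 ≤ #(reach E v) := by
      by_contra! h
      exact hv (mem_sinks.2 (eq_singleton_iff_unique_mem.2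
        ⟨hmem, fun w hw => card_le_one.1 (by omega) w hw v hmem⟩))
    have hle := hreach v
    rw [card_erase_of_mem hmem]
    omega
  obtain ⟨w, hw⟩ := card_eq_one.1 hcard
  refine ⟨w, ne_of_mem_erase (hw ▸ mem_singleton_self w), ?_⟩
  rw [← insert_erase hmem, hw]

theorem mem_closedPairs_iff_of_notMem_sinks (hreach : ∀ v, #(reach E v) ≤ 2) {x y : V}
    (hx : x ∉ sinks E) : (x, y) ∈ closedPairs E ↔ reach E x = {x, y} := by
  obtain ⟨w, hwx, hxw⟩ := exists_reach_eq_pair hreach hx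
  rw [mem_closedPairs]
  constructor
  · rintro ⟨-, hsub⟩
    have hw : w ∈ ({x, y} : Finset V) :=
      hsub (mem_union_left _ (hxw ▸ mem_insert_of_mem (mem_singleton_self w)))
    rcases mem_insert.1 hw with h | h
    · exact absurd h hwx
    · rw [hxw, mem_singleton.1 h]
  · intro h
    have hy : y ∈ reach E x := h ▸ mem_insert_of_mem (mem_singleton_self y)
    refine ⟨?_, union_subset h.le ((reach_subset_reach hy).trans h.le)⟩
    rintro rfl
    rw [insert_eq_of_mem (mem_singleton_self x)] at h
    exact hx (mem_sinks.2 h)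

theorem injOn_fst_closedPairs (hreach : ∀ v, #(reach E v) ≤ 2) :
    Set.InjOn Prod.fst
      (({p ∈ closedPairs E | p.1 ∉ sinks E} : Finset (V × V)) : Set (V × V)) := by
  rintro ⟨x, y⟩ h ⟨x', y'⟩ h' (rfl : x = x')
  simp only [coe_filter, Set.mem_ofPred_eq] at h h'
  have hxy := (mem_closedPairs.1 h.1).1
  rw [mem_closedPairs_iff_of_notMem_sinks hreach h.2] at h
  rw [mem_closedPairs_iff_of_notMem_sinks hreach h'.2, h.1] at h'
  have hy : y ∈ ({x, y'} : Finset V) := h'.1 ▸ mem_insert_of_mem (mem_singleton_self y)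
  rcases mem_insert.1 hy with h | h
  · exact absurd h.symm hxy
  · rw [mem_singleton.1 h]

theorem card_closedPairs_filter_notMem_sinks (hreach : ∀ v, #(reach E v) ≤ 2) :
    #{p ∈ closedPairs E | p.1 ∉ sinks E} = #(sinks E)ᶜ := by
  rw [← card_image_of_injOn (injOn_fst_closedPairs hreach)]
  congr 1
  ext x
  simp only [mem_image, mem_filter, mem_compl, Prod.exists, exists_and_right, exists_eq_right]
  refine ⟨And.right, fun hx => ?_⟩
  obtain ⟨w, -, hw⟩ := exists_reach_eq_pair hreach hx
  exact ⟨⟨w, (mem_closedPairs_iff_of_notMem_sinks hreach hx).2 hw⟩, hx⟩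

theorem card_closedPairs_filter_snd (P : V → Prop) [DecidablePred P] :
    #{p ∈ closedPairs E | P p.2} = #{p ∈ closedPairs E | P p.1} := by
  refine card_nbij' Prod.swap Prod.swap ?_ ?_ (fun p _ => p.swap_swap) (fun p _ => p.swap_swap) <;>
  · intro p hp
    simp only [coe_filter, Set.mem_ofPred_eq] at hp ⊢
    exact ⟨swap_mem_closedPairs hp.1, hp.2⟩

theorem closedPairs_filter_sinks :
    {p ∈ closedPairs E | p.1 ∈ sinks E ∧ p.2 ∈ sinks E} = (sinks E).offDiag := by
  ext ⟨x, y⟩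
  simp only [mem_filter, mem_offDiag, mem_closedPairs]
  constructor
  · rintro ⟨⟨hxy, -⟩, hx, hy⟩
    exact ⟨hx, hy, hxy⟩
  · rintro ⟨hx, hy, hxy⟩
    rw [mem_sinks.1 hx, mem_sinks.1 hy, ← insert_eq]
    exact ⟨⟨hxy, subset_refl _⟩, hx, hy⟩

/-- Inclusion–exclusion over the two ends: closed pairs of sinks form the off-diagonal of `sinks E`,
and a closed pair with a non-sink end is determined by that end. -/
theorem card_closedPairs_add_card_nonsinkPairs (hreach : ∀ v, #(reach E v) ≤ 2) :
    #(closedPairs E) + #{p ∈ closedPairs E | p.1 ∉ sinks E ∧ p.2 ∉ sinks E} + #(sinks E) =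
      #(sinks E) * #(sinks E) + 2 * #(sinks E)ᶜ := by
  have hsplit := card_filter_add_card_filter_not (s := closedPairs E)
    (p := fun p => p.1 ∈ sinks E ∧ p.2 ∈ sinks E)
  have hnot : {p ∈ closedPairs E | ¬(p.1 ∈ sinks E ∧ p.2 ∈ sinks E)} =
      {p ∈ closedPairs E | p.1 ∉ sinks E} ∪ {p ∈ closedPairs E | p.2 ∉ sinks E} := by
    rw [← filter_or]
    simp only [not_and_or]
  have hunion := card_union_add_card_inter {p ∈ closedPairs E | p.1 ∉ sinks E}
    {p ∈ closedPairs E | p.2 ∉ sinks E}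
  rw [← filter_and, card_closedPairs_filter_snd (fun v => v ∉ sinks E),
    card_closedPairs_filter_notMem_sinks hreach] at hunion
  rw [closedPairs_filter_sinks, offDiag_card, hnot] at hsplit
  have := Nat.le_mul_self #(sinks E)
  omega

end ClosedPairs

section ExtHamming

variable {k : ℕ}

theorem zero_mem_extHamming : (0 : Fin (2 ^ k) → ZMod 2) ∈ extHamming k := by
  simp [extHamming]

theorem val_testBit_eq_false_of_le (p : Fin (2 ^ k)) {j : ℕ} (hj : k ≤ j) :
    p.val.testBit j = false :=
  Nat.testBit_eq_false_of_lt (p.isLt.trans_le (Nat.pow_le_pow_right two_pos hj))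

theorem four_singles_mem_extHamming_iff {p q r s : Fin (2 ^ k)} :
    Pi.single p 1 + Pi.single q 1 + (Pi.single r 1 + Pi.single s 1) ∈ extHamming k ↔
      p.val ^^^ q.val ^^^ (r.val ^^^ s.val) = 0 := by
  have bits : ∀ a b c d : Bool, ((if a then 1 else 0) + (if b then 1 else 0) +
      ((if c then 1 else 0) + (if d then 1 else 0)) : ZMod 2) = 0 ↔
      (a ^^ b ^^ (c ^^ d)) = false := by decide
  simp only [extHamming, Set.mem_ofPred_eq, Pi.add_apply, sum_add_distrib, sum_pi_single',
    mem_filter, mem_univ, true_and, if_true, bits]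
  constructor
  · rintro ⟨-, h⟩
    refine Nat.eq_of_testBit_eq fun j => ?_
    rw [Nat.zero_testBit]
    simp only [Nat.testBit_xor]
    by_cases hj : j < k
    · exact h j hj
    · simp [val_testBit_eq_false_of_le _ (not_lt.1 hj)]
  · intro h
    refine ⟨by decide, fun j _ => ?_⟩
    simpa [Nat.testBit_xor] using congrArg (Nat.testBit · j) h

theorem eq_of_single_add_single_mem_extHamming {p q : Fin (2 ^ k)}
    (h : Pi.single p 1 + Pi.single q 1 ∈ extHamming k) : p = q := by
  have hpp : (Pi.single p 1 + Pi.single p 1 : Fin (2 ^ k) → ZMod 2) = 0 :=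
    funext fun _ => CharTwo.add_self_eq_zero _
  rw [← add_zero (_ + _), ← hpp, four_singles_mem_extHamming_iff, Nat.xor_self,
    Nat.xor_zero, Nat.xor_eq_zero_iff] at h
  exact Fin.ext h

end ExtHamming

section PerfectCode

variable {k : ℕ} {E : Fin (2 ^ k) → Fin (2 ^ k) → Prop}

theorem card_reach_le_two (hcov : IsCovering (dG E) (extHamming k) 2) (v : Fin (2 ^ k)) :
    #(reach E v) ≤ 2 := by
  obtain ⟨c, hc, hd⟩ := hcov (Pi.single v 1)
  set y := c - Pi.single v 1 with hy
  have hnorm : hammingNorm y ≤ 2 := (hammingNorm_le_wtG y).trans hd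
  have hodd : hammingNorm y % 2 = 1 % 2 :=
    hammingNorm_mod_two (by simp [hy, sum_sub_distrib, hc.1])
  obtain ⟨u, hu⟩ := exists_eq_single_of_hammingNorm_eq_one (by omega : hammingNorm y = 1)
  have huv : u = v := by
    rw [← sub_add_cancel c (Pi.single v 1), ← hy, hu] at hc
    exact eq_of_single_add_single_mem_extHamming hc
  rw [← wtG_single E v, ← huv, ← hu]
  exact hd

theorem exists_closed_pair_xor_eq (hcov : IsCovering (dG E) (extHamming k) 2)
    {p q : Fin (2 ^ k)} (hpq : p ≠ q) :
    ∃ r s, r ≠ s ∧ r.val ^^^ s.val = p.val ^^^ q.val ∧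
      wtG E (Pi.single r 1 + Pi.single s 1) ≤ 2 := by
  obtain ⟨c, hc, hd⟩ := hcov (Pi.single p 1 + Pi.single q 1)
  set y := c - (Pi.single p 1 + Pi.single q 1) with hy
  have hnorm : hammingNorm y ≤ 2 := (hammingNorm_le_wtG y).trans hd
  have heven : hammingNorm y % 2 = 2 % 2 :=
    hammingNorm_mod_two (by simp [hy, sum_sub_distrib, sum_add_distrib, hc.1]; decide)
  have hc' : c = Pi.single p 1 + Pi.single q 1 + y := by rw [hy, add_sub_cancel]
  rcases (by omega : hammingNorm y = 0 ∨ hammingNorm y = 2) with h0 | h2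
  · rw [hc', hammingNorm_eq_zero.1 h0, add_zero] at hc
    exact absurd (eq_of_single_add_single_mem_extHamming hc) hpq
  · obtain ⟨r, s, hrs, hyrs⟩ := exists_eq_single_add_single_of_hammingNorm_eq_two h2
    rw [hc', hyrs, four_singles_mem_extHamming_iff, Nat.xor_eq_zero_iff] at hc
    exact ⟨r, s, hrs, hc.symm, hyrs ▸ hd⟩

theorem closed_pair_unique_of_xor_eq (hpack : IsPacking (dG E) (extHamming k) 2)
    {x y r s : Fin (2 ^ k)} (hxy : x ≠ y) (hrs : r ≠ s)
    (hwxy : wtG E (Pi.single x 1 + Pi.single y 1) ≤ 2)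
    (hwrs : wtG E (Pi.single r 1 + Pi.single s 1) ≤ 2)
    (hxor : x.val ^^^ y.val = r.val ^^^ s.val) :
    x = r ∧ y = s ∨ x = s ∧ y = r := by
  set c : Fin (2 ^ k) → ZMod 2 :=
    Pi.single x 1 + Pi.single y 1 + (Pi.single r 1 + Pi.single s 1) with hc
  have hmem : c ∈ extHamming k :=
    four_singles_mem_extHamming_iff.2 (Nat.xor_eq_zero_iff.2 hxor)
  have hc0 : c = 0 := by
    by_contra hne
    refine hpack 0 zero_mem_extHamming c hmem (Ne.symm hne)
      (Pi.single x 1 + Pi.single y 1) ⟨?_, ?_⟩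
    · rwa [dG, zero_sub, wtG_neg]
    · rwa [dG, hc, add_sub_cancel_left]
  have heq : (Pi.single x 1 + Pi.single y 1 : Fin (2 ^ k) → ZMod 2) =
      Pi.single r 1 + Pi.single s 1 := by
    rw [eq_neg_of_add_eq_zero_left hc0]
    exact funext fun _ => ZMod.neg_eq_self_mod_two _
  have hsupp := congrArg (fun f : Fin (2 ^ k) → ZMod 2 => ({i | f i ≠ 0} : Finset _)) heq
  simp only [support_single_add_single one_ne_zero one_ne_zero hxy,
    support_single_add_single one_ne_zero one_ne_zero hrs] at hsupp
  rw [← coe_inj, coe_pair, coe_pair] at hsupp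
  exact Set.pair_eq_pair_iff.1 hsupp

/-- Each nonzero `d < 2 ^ k` is the XOR `x ^^^ y` of exactly one closed pair up to order:
covering produces one, packing forbids a second. -/
theorem card_closedPairs_of_perfect (hcov : IsCovering (dG E) (extHamming k) 2)
    (hpack : IsPacking (dG E) (extHamming k) 2) :
    #(closedPairs E) = 2 * (2 ^ k - 1) := by
  have hmaps : Set.MapsTo (fun p : Fin (2 ^ k) × Fin (2 ^ k) => p.1.val ^^^ p.2.val)
      (closedPairs E) ((range (2 ^ k)).erase 0) := by
    rintro ⟨x, y⟩ h
    rw [mem_coe, mem_closedPairs] at h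
    simp only [mem_coe, mem_erase, mem_range, ne_eq, Nat.xor_eq_zero_iff]
    exact ⟨fun h' => h.1 (Fin.ext h'), Nat.xor_lt_two_pow x.isLt y.isLt⟩
  rw [card_eq_sum_card_fiberwise hmaps, sum_const_nat (m := 2),
    card_erase_of_mem (mem_range.2 (Nat.two_pow_pos k)), card_range, mul_comm]
  intro d hd
  rw [mem_erase, mem_range] at hd
  obtain ⟨r, s, hrs, hxor, hw⟩ := exists_closed_pair_xor_eq hcov
    (p := ⟨0, Nat.two_pow_pos k⟩) (q := ⟨d, hd.2⟩) (by simp [Fin.ext_iff, Ne.symm hd.1])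
  rw [Nat.zero_xor] at hxor
  have hfiber : {p ∈ closedPairs E | p.1.val ^^^ p.2.val = d} = {(r, s), (s, r)} := by
    ext ⟨x, y⟩
    simp only [mem_filter, mem_closedPairs_iff_wtG, mem_insert, mem_singleton, Prod.mk.injEq]
    constructor
    · rintro ⟨⟨hxy, hwxy⟩, hd'⟩
      exact closed_pair_unique_of_xor_eq hpack hxy hrs hwxy hw (hd'.trans hxor.symm)
    · rintro (⟨rfl, rfl⟩ | ⟨rfl, rfl⟩)
      · exact ⟨⟨hrs, hw⟩, hxor⟩
      · exact ⟨⟨hrs.symm, by rwa [add_comm]⟩, by rwa [Nat.xor_comm]⟩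
  rw [hfiber, card_pair]
  simp [hrs]

end PerfectCode

section Poset

theorem Omega_one_one {α : Type*} [Fintype α] (le : α → α → Prop) (π : α → ℕ) (ω : ℕ) :
    Omega le π 1 ω 1 = #{a | π a = ω ∧ ∀ b, le b a → b = a} := by
  symm
  refine card_bij (fun a _ => {a}) (fun a ha => ?_) (fun _ _ _ _ => singleton_inj.1)
    (fun I hI => ?_)
  · simp only [mem_filter, mem_univ, true_and] at ha ⊢
    refine ⟨fun x hx b hb => ?_, card_singleton a, by rw [sum_singleton, ha.1], ?_⟩
    · rw [mem_singleton] at hx ⊢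
      exact ha.2 b (hx ▸ hb)
    · rw [filter_singleton, if_pos (by simp +contextual [eq_comm]), card_singleton]
  · simp only [mem_filter, mem_univ, true_and] at hI
    obtain ⟨hdown, hcard, hsum, -⟩ := hI
    obtain ⟨a, rfl⟩ := card_eq_one.1 hcard
    refine ⟨a, ?_, rfl⟩
    simp only [mem_filter, mem_univ, true_and]
    exact ⟨by rwa [sum_singleton] at hsum,
      fun b hb => mem_singleton.1 (hdown a (mem_singleton_self a) b hb)⟩

variable {V : Type*} [Fintype V]

theorem card_filter_mk_eq_mul {r : Setoid V} {t : Finset (Quotient r)} {ω : ℕ}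
    (ht : ∀ c ∈ t, #{v | Quotient.mk r v = c} = ω) :
    #{v | Quotient.mk r v ∈ t} = #t * ω := by
  rw [card_eq_sum_card_fiberwise (f := Quotient.mk r) (t := t) fun v hv => by simpa using hv]
  refine sum_const_nat fun c hc => ?_
  rw [filter_filter, ← ht c hc]
  exact congrArg card (filter_congr fun v _ => and_iff_right_of_imp fun h => h ▸ hc)

variable (E : V → V → Prop)

def IsTerminal (v : V) : Prop := ∀ w ∈ reach E v, v ∈ reach E w

variable {E}

theorem isMinimal_mk_iff {v : V} :
    (∀ b, clsLe E b (Quotient.mk _ v) → b = Quotient.mk _ v) ↔ IsTerminal E v := by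
  constructor
  · intro h w hw
    rcases reflTransGen_iff_eq_or_transGen.1 (mem_reach.1 hw) with rfl | hvw
    · exact self_mem_reach w
    · exact (mk_eq_mk_iff.1 (h _ (Or.inr ⟨w, v, rfl, rfl, hvw⟩))).2
  · rintro h b (rfl | ⟨x, y, rfl, hy, hyx⟩)
    · rfl
    · have hx : x ∈ reach E v :=
        reach_subset_reach (mk_eq_mk_iff.1 hy).1 (mem_reach.2 hyx.to_reflTransGen)
      exact mk_eq_mk_iff.2 ⟨hx, h x hx⟩

theorem clsWt_mk_of_isTerminal {v : V} (h : IsTerminal E v) :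
    clsWt E (Quotient.mk _ v) = #(reach E v) := by
  simp only [clsWt, mk_eq_mk_iff]
  congr 1
  ext w
  simp only [mem_filter, mem_univ, true_and, and_iff_left_iff_imp]
  exact h w

theorem Omega_one_mul_eq_card (ω : ℕ) :
    Omega (clsLe E) (clsWt E) 1 ω 1 * ω = #{v | IsTerminal E v ∧ #(reach E v) = ω} := by
  rw [Omega_one_one,
    ← card_filter_mk_eq_mul fun c hc => by simp only [mem_filter] at hc; exact hc.2.1]
  refine congrArg card (filter_congr fun v _ => ?_)
  simp only [mem_filter, mem_univ, true_and]
  rw [isMinimal_mk_iff, and_comm]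
  exact and_congr_right fun h => by rw [clsWt_mk_of_isTerminal h]

end Poset

section TerminalCount

variable {V : Type*} [Fintype V] [DecidableEq V] {E : V → V → Prop}

theorem isTerminal_and_card_reach_eq_one_iff {v : V} :
    IsTerminal E v ∧ #(reach E v) = 1 ↔ v ∈ sinks E := by
  rw [mem_sinks]
  constructor
  · rintro ⟨-, h⟩
    obtain ⟨a, ha⟩ := card_eq_one.1 h
    have hv := self_mem_reach (E := E) v
    rw [ha, mem_singleton] at hv
    rw [ha, hv]
  · intro h
    refine ⟨fun w hw => ?_, by rw [h, card_singleton]⟩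
    rw [h, mem_singleton] at hw
    rw [hw]
    exact self_mem_reach v

theorem isTerminal_and_card_reach_eq_two_iff (hreach : ∀ v, #(reach E v) ≤ 2) {v : V} :
    IsTerminal E v ∧ #(reach E v) = 2 ↔
      ∃ y, (v, y) ∈ closedPairs E ∧ v ∉ sinks E ∧ y ∉ sinks E := by
  constructor
  · rintro ⟨hterm, hcard⟩
    have hv : v ∉ sinks E := fun h => by rw [mem_sinks.1 h, card_singleton] at hcard; cases hcard
    obtain ⟨w, hwv, hw⟩ := exists_reach_eq_pair hreach hv
    refine ⟨w, (mem_closedPairs_iff_of_notMem_sinks hreach hv).2 hw, hv, fun h => hwv ?_⟩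
    have hvw := hterm w (hw ▸ mem_insert_of_mem (mem_singleton_self w))
    rw [mem_sinks.1 h, mem_singleton] at hvw
    exact hvw.symm
  · rintro ⟨y, hp, hv, hy⟩
    have hvy := (mem_closedPairs.1 hp).1
    have hreach_v := (mem_closedPairs_iff_of_notMem_sinks hreach hv).1 hp
    have hreach_y := (mem_closedPairs_iff_of_notMem_sinks hreach hy).1 (swap_mem_closedPairs hp)
    refine ⟨fun w hw => ?_, by rw [hreach_v, card_pair hvy]⟩
    rw [hreach_v, mem_insert, mem_singleton] at hw
    rcases hw with rfl | rfl
    · exact self_mem_reach w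
    · rw [hreach_y]
      exact mem_insert_of_mem (mem_singleton_self v)

theorem Omega_one_one_one_eq_card_sinks : Omega (clsLe E) (clsWt E) 1 1 1 = #(sinks E) := by
  rw [← mul_one (Omega _ _ _ _ _), Omega_one_mul_eq_card]
  exact congrArg card
    (filter_congr fun v _ => isTerminal_and_card_reach_eq_one_iff.trans mem_sinks)

theorem two_mul_Omega_one_two_one (hreach : ∀ v, #(reach E v) ≤ 2) :
    2 * Omega (clsLe E) (clsWt E) 1 2 1 =
      #{p ∈ closedPairs E | p.1 ∉ sinks E ∧ p.2 ∉ sinks E} := by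
  have hsub : {p ∈ closedPairs E | p.1 ∉ sinks E ∧ p.2 ∉ sinks E} ⊆
      {p ∈ closedPairs E | p.1 ∉ sinks E} := fun p hp => by
    rw [mem_filter] at hp ⊢
    exact ⟨hp.1, hp.2.1⟩
  have hinj := (injOn_fst_closedPairs hreach).mono (coe_subset.2 hsub)
  rw [mul_comm, Omega_one_mul_eq_card, ← card_image_of_injOn hinj]
  congr 1
  ext v
  simp only [mem_filter, mem_univ, true_and, mem_image, Prod.exists, exists_and_right,
    exists_eq_right, isTerminal_and_card_reach_eq_two_iff hreach]

end TerminalCount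

end GCode

theorem stmt_19_general {k : ℕ}
    (E : Fin (2 ^ k) → Fin (2 ^ k) → Prop)
    (hperf : IsCovering (dG E) (extHamming k) 2 ∧
      IsPacking (dG E) (extHamming k) 2) :
    2 * (Omega (clsLe E) (clsWt E) 1 2 1 : ℤ) =
      2 + (Omega (clsLe E) (clsWt E) 1 1 1 : ℤ) *
        ((Omega (clsLe E) (clsWt E) 1 1 1 : ℤ) - 3) := by
  open GCode Finset in
  obtain ⟨hcov, hpack⟩ := hperf
  have hreach := card_reach_le_two hcov
  have hcount := card_closedPairs_add_card_nonsinkPairs hreach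
  rw [card_closedPairs_of_perfect hcov hpack, ← two_mul_Omega_one_two_one hreach,
    ← Omega_one_one_one_eq_card_sinks] at hcount
  have hsplit : #(sinks E) + #(sinks E)ᶜ = 2 ^ k := by
    rw [card_add_card_compl, Fintype.card_fin]
  rw [← Omega_one_one_one_eq_card_sinks] at hsplit
  zify [Nat.one_le_two_pow] at hcount hsplit
  linear_combination hcount + 2 * hsplit

theorem stmt_19 {k : ℕ} (hk : 2 ≤ k)
    (E : Fin (2 ^ k) → Fin (2 ^ k) → Prop) (hirrefl : ∀ v, ¬ E v v)
    (hperf : IsCovering (dG E) (extHamming k) 2 ∧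
      IsPacking (dG E) (extHamming k) 2) :
    2 * (Omega (clsLe E) (clsWt E) 1 2 1 : ℤ) =
      2 + (Omega (clsLe E) (clsWt E) 1 1 1 : ℤ) *
        ((Omega (clsLe E) (clsWt E) 1 1 1 : ℤ) - 3) :=
  stmt_19_general E hperf
end
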